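/- arXiv:1807.09858 — 7 statements merged into one kernel-verified Lean document; each statement's English description precedes it below -/
import Mathlib

section
/- Let t_Z be a free abelian group of finite rank with a finite spanning multiset of primitive cocharacters γ_1,...,γ_n ∈ t_Z, and for λ in the dual lattice write λ_i = ⟨λ, γ_i⟩. Call a nonzero primitive element of the dual lattice with minimal (inclusion-wise) support among nonzero elements a cocircuit. Then every λ in the dual lattice can be written as a sum λ = μ¹ + ... + μᵐ of cocircuits, each of whose support is contained in the support of λ (the support of λ being the set of indices i with λ_i ≠ 0). -/
open scoped BigOperators

/-- The support of a dual-lattice element `lam` with respect to the cocharacters `γ`: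
the set of indices `i` with `λ_i = ⟨λ, γ_i⟩ ≠ 0`. -/
def Supp {tZ : Type} [AddCommGroup tZ] {n : ℕ} (γ : Fin n → tZ)
    (lam : tZ →ₗ[ℤ] ℤ) : Set (Fin n) := {i | lam (γ i) ≠ 0}

/-- A dual-lattice element is primitive if it is not a nontrivial integer multiple. -/
def IsPrimitiveDual {tZ : Type} [AddCommGroup tZ] (lam : tZ →ₗ[ℤ] ℤ) : Prop :=
  ∀ (c : ℤ) (μ : tZ →ₗ[ℤ] ℤ), lam = c • μ → IsUnit c

/-- A cocircuit: a nonzero primitive element of the dual lattice whose support is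
minimal (inclusion-wise) among supports of nonzero elements. -/
def IsCocircuit {tZ : Type} [AddCommGroup tZ] {n : ℕ} (γ : Fin n → tZ)
    (lam : tZ →ₗ[ℤ] ℤ) : Prop :=
  lam ≠ 0 ∧ IsPrimitiveDual lam ∧
    ∀ μ : tZ →ₗ[ℤ] ℤ, μ ≠ 0 → Supp γ μ ⊆ Supp γ lam → Supp γ μ = Supp γ lam

/-!
Induction on the support of `λ`. If `λ ≠ 0`, a nonzero functional of minimal support inside
`Supp λ`, divided by the gcd of its values on the `γᵢ`, is a cocircuit `μ` with
`Supp μ ⊆ Supp λ`. For `i ∈ Supp λ` the functional `μᵢ • λ - λᵢ • μ` is supported in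
`Supp λ \ {i}`, so by induction `μᵢ • λ` lies in the `ℤ`-span of the cocircuits supported in
`Supp λ`. As `μ` is primitive and the `γᵢ` span, the `μᵢ` generate the unit ideal of `ℤ`, so `λ`
itself lies in that span. Cocircuits are closed under negation, so this span consists of sums of
cocircuits.
-/

open Set Submodule

section Divisibility

variable {M ι : Type*} [AddCommGroup M]

lemma LinearMap.exists_eq_zsmul_of_forall_dvd (ν : M →ₗ[ℤ] ℤ) {d : ℤ} (h : ∀ v, d ∣ ν v) :
    ∃ ρ : M →ₗ[ℤ] ℤ, ν = d • ρ :=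
  ⟨{ toFun := fun v => ν v / d
     map_add' := fun v w => by rw [map_add, Int.add_ediv_of_dvd_left (h v)]
     map_smul' := fun c v => by
       rw [map_smul, smul_eq_mul, Int.mul_ediv_assoc _ (h v), RingHom.id_apply, smul_eq_mul] },
    LinearMap.ext fun v => (Int.mul_ediv_cancel' (h v)).symm⟩

variable {γ : ι → M} (hγ : span ℤ (range γ) = ⊤)
include hγ

lemma forall_dvd_of_forall_dvd_apply {ν : M →ₗ[ℤ] ℤ} {d : ℤ} (h : ∀ i, d ∣ ν (γ i)) (v : M) :
    d ∣ ν v := by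
  have hle : span ℤ (range γ) ≤ Submodule.comap ν (Ideal.span {d}) :=
    span_le.2 <| range_subset_iff.2 fun i => Ideal.mem_span_singleton.2 (h i)
  exact Ideal.mem_span_singleton.1 (hle (hγ ▸ mem_top : v ∈ span ℤ (range γ)))

lemma exists_eq_zsmul_of_forall_dvd_apply {ν : M →ₗ[ℤ] ℤ} {d : ℤ} (h : ∀ i, d ∣ ν (γ i)) :
    ∃ ρ : M →ₗ[ℤ] ℤ, ν = d • ρ :=
  ν.exists_eq_zsmul_of_forall_dvd (forall_dvd_of_forall_dvd_apply hγ h)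

end Divisibility

variable {tZ : Type} [AddCommGroup tZ] {n : ℕ} {γ : Fin n → tZ}

lemma supp_neg (lam : tZ →ₗ[ℤ] ℤ) : Supp γ (-lam) = Supp γ lam := by
  ext i; simp [Supp]

lemma supp_zsmul {c : ℤ} (hc : c ≠ 0) (lam : tZ →ₗ[ℤ] ℤ) : Supp γ (c • lam) = Supp γ lam := by
  ext i; simp [Supp, hc]

lemma IsCocircuit.neg {lam : tZ →ₗ[ℤ] ℤ} (h : IsCocircuit γ lam) : IsCocircuit γ (-lam) := by
  obtain ⟨hne, hprim, hmin⟩ := h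
  refine ⟨neg_ne_zero.2 hne, fun c μ hc => hprim c (-μ) (by rw [smul_neg, ← hc, neg_neg]), ?_⟩
  simpa only [supp_neg] using hmin

lemma isCocircuit_neg_iff {lam : tZ →ₗ[ℤ] ℤ} : IsCocircuit γ (-lam) ↔ IsCocircuit γ lam :=
  ⟨fun h => neg_neg lam ▸ h.neg, IsCocircuit.neg⟩

lemma supp_zsmul_sub_zsmul_subset {lam μ : tZ →ₗ[ℤ] ℤ} (hμ : Supp γ μ ⊆ Supp γ lam) (i : Fin n) :
    Supp γ (μ (γ i) • lam - lam (γ i) • μ) ⊆ Supp γ lam \ {i} := by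
  intro j hj
  simp only [Supp, mem_ofPred_eq, LinearMap.sub_apply, LinearMap.smul_apply, smul_eq_mul] at hj
  refine ⟨fun hlj => hj ?_, fun hji => hj ?_⟩
  · have hμj : μ (γ j) = 0 := not_not.1 fun h => hμ h hlj
    rw [hlj, hμj, mul_zero, mul_zero, sub_zero]
  · rw [mem_singleton_iff.1 hji, mul_comm, sub_self]

variable (γ) in
def cocircuitSpan (S : Set (Fin n)) : Submodule ℤ (tZ →ₗ[ℤ] ℤ) :=
  span ℤ {μ | IsCocircuit γ μ ∧ Supp γ μ ⊆ S}

lemma cocircuitSpan_mono {S T : Set (Fin n)} (h : S ⊆ T) : cocircuitSpan γ S ≤ cocircuitSpan γ T :=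
  span_mono fun _ hμ => ⟨hμ.1, hμ.2.trans h⟩

lemma exists_sum_of_mem_cocircuitSpan {S : Set (Fin n)} {lam : tZ →ₗ[ℤ] ℤ}
    (h : lam ∈ cocircuitSpan γ S) :
    ∃ (m : ℕ) (μ : Fin m → (tZ →ₗ[ℤ] ℤ)),
      (∀ k, IsCocircuit γ (μ k) ∧ Supp γ (μ k) ⊆ S) ∧ lam = ∑ k, μ k := by
  have hneg : -{μ | IsCocircuit γ μ ∧ Supp γ μ ⊆ S} = {μ | IsCocircuit γ μ ∧ Supp γ μ ⊆ S} := by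
    ext μ; simp [isCocircuit_neg_iff, supp_neg]
  rw [cocircuitSpan, ← mem_toAddSubgroup, span_int_eq_addSubgroupClosure,
    ← AddSubgroup.mem_toAddSubmonoid, AddSubgroup.closure_toAddSubmonoid, hneg, union_self] at h
  obtain ⟨l, hl, rfl⟩ := AddSubmonoid.exists_list_of_mem_closure h
  exact ⟨l.length, l.get, fun k => hl _ (List.get_mem l k), by rw [← List.sum_ofFn, List.ofFn_get]⟩

section Spanning

variable (hγ : span ℤ (range γ) = ⊤)
include hγ

lemma IsPrimitiveDual.span_range_apply_eq_top {μ : tZ →ₗ[ℤ] ℤ} (hμ : IsPrimitiveDual μ) :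
    Ideal.span (range fun i => μ (γ i)) = ⊤ := by
  set J := Ideal.span (range fun i => μ (γ i))
  obtain ⟨ρ, hρ⟩ := exists_eq_zsmul_of_forall_dvd_apply hγ fun i =>
    (IsPrincipal.mem_iff_generator_dvd J).1 (Ideal.subset_span (mem_range_self i))
  rw [← IsPrincipal.span_singleton_generator J]
  exact Ideal.span_singleton_eq_top.2 (hμ _ ρ hρ)

lemma exists_isPrimitiveDual_zsmul_eq {ν : tZ →ₗ[ℤ] ℤ} (hν : ν ≠ 0) :
    ∃ g : ℤ, g ≠ 0 ∧ ∃ μ : tZ →ₗ[ℤ] ℤ, IsPrimitiveDual μ ∧ ν = g • μ := by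
  set J := Ideal.span (range fun i => ν (γ i))
  set g := IsPrincipal.generator J
  obtain ⟨μ, hνμ⟩ : ∃ μ, ν = g • μ := exists_eq_zsmul_of_forall_dvd_apply hγ fun i =>
    (IsPrincipal.mem_iff_generator_dvd J).1 (Ideal.subset_span (mem_range_self i))
  have hg : g ≠ 0 := by rintro hg; exact hν (by rw [hνμ, hg, zero_smul])
  refine ⟨g, hg, μ, fun c ρ hc => isUnit_of_dvd_one ?_, hνμ⟩
  have hJ : J ≤ Ideal.span {g * c} := Ideal.span_le.2 <| range_subset_iff.2 fun i =>
    Ideal.mem_span_singleton.2 ⟨ρ (γ i), by simp [hνμ, hc, mul_assoc]⟩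
  have hgc : g * c ∣ g * 1 := by
    rw [mul_one]; exact Ideal.mem_span_singleton.1 (hJ (IsPrincipal.generator_mem J))
  exact (mul_dvd_mul_iff_left hg).1 hgc

lemma exists_isCocircuit_supp_subset {lam : tZ →ₗ[ℤ] ℤ} (hlam : lam ≠ 0) :
    ∃ μ, IsCocircuit γ μ ∧ Supp γ μ ⊆ Supp γ lam := by
  obtain ⟨ν, ⟨hν, hνlam⟩, hmin⟩ := exists_minimalFor_of_wellFoundedLT
    (fun ν : tZ →ₗ[ℤ] ℤ => ν ≠ 0 ∧ Supp γ ν ⊆ Supp γ lam) (Supp γ) ⟨lam, hlam, subset_rfl⟩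
  obtain ⟨g, hg, μ, hμ, rfl⟩ := exists_isPrimitiveDual_zsmul_eq hγ hν
  rw [supp_zsmul hg] at hνlam hmin
  refine ⟨μ, ⟨right_ne_zero_of_smul hν, hμ, fun ρ hρ hsub => ?_⟩, hνlam⟩
  exact hsub.antisymm (hmin ⟨hρ, hsub.trans hνlam⟩ hsub)

lemma mem_cocircuitSpan_supp (lam : tZ →ₗ[ℤ] ℤ) : lam ∈ cocircuitSpan γ (Supp γ lam) := by
  induction hS : Supp γ lam using WellFoundedLT.induction generalizing lam with
  | ind S ih =>
  subst hS
  by_cases hlam : lam = 0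
  · exact hlam ▸ zero_mem _
  obtain ⟨μ, hμ, hμlam⟩ := exists_isCocircuit_supp_subset hγ hlam
  have hmem : ∀ i, μ (γ i) • lam ∈ cocircuitSpan γ (Supp γ lam) := by
    intro i
    by_cases hi : i ∈ Supp γ lam
    · have hlt : Supp γ (μ (γ i) • lam - lam (γ i) • μ) < Supp γ lam :=
        (supp_zsmul_sub_zsmul_subset hμlam i).trans_ssubset (sdiff_singleton_ssubset.2 hi)
      rw [← sub_add_cancel (μ (γ i) • lam) (lam (γ i) • μ)]
      exact add_mem (cocircuitSpan_mono hlt.le (ih _ hlt _ rfl))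
        (smul_mem _ _ (subset_span ⟨hμ, hμlam⟩))
    · rw [not_not.1 fun h => hi (hμlam h), zero_smul]
      exact zero_mem _
  let I : Ideal ℤ := (cocircuitSpan γ (Supp γ lam)).comap (LinearMap.toSpanSingleton ℤ _ lam)
  have hI : I = ⊤ := top_unique <| (hμ.2.1.span_range_apply_eq_top hγ).ge.trans <|
    Ideal.span_le.2 (range_subset_iff.2 hmem)
  simpa [I] using (hI ▸ mem_top : (1 : ℤ) ∈ I)

end Spanning

theorem stmt0_general (tZ : Type) [AddCommGroup tZ]
    (n : ℕ) (γ : Fin n → tZ)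
    (hsemigroup : ∀ v : tZ, ∃ c : Fin n → ℕ, v = ∑ j, (c j : ℤ) • γ j)
    (lam : tZ →ₗ[ℤ] ℤ) :
    ∃ (m : ℕ) (μ : Fin m → (tZ →ₗ[ℤ] ℤ)),
      (∀ k, IsCocircuit γ (μ k) ∧ Supp γ (μ k) ⊆ Supp γ lam) ∧
      lam = ∑ k, μ k := by
  have hγ : span ℤ (range γ) = ⊤ := eq_top_iff.2 fun v _ => by
    obtain ⟨c, rfl⟩ := hsemigroup v
    exact sum_mem fun j _ => smul_mem _ _ (subset_span (mem_range_self j))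
  exact exists_sum_of_mem_cocircuitSpan (mem_cocircuitSpan_supp hγ lam)

/-- Every element of the dual lattice is a sum of cocircuits supported in its support. -/
theorem stmt0 (tZ : Type) [AddCommGroup tZ] [Module.Free ℤ tZ] [Module.Finite ℤ tZ]
    (n : ℕ) (γ : Fin n → tZ)
    (hne : ∀ i, γ i ≠ 0)
    (hprim : ∀ i, ∀ (c : ℤ) (w : tZ), γ i = c • w → IsUnit c)
    (hspanother : ∀ i, ∃ (d : ℤ) (c : Fin n → ℤ), d ≠ 0 ∧ c i = 0 ∧
      d • γ i = ∑ j, c j • γ j)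
    (hsemigroup : ∀ v : tZ, ∃ c : Fin n → ℕ, v = ∑ j, (c j : ℤ) • γ j)
    (lam : tZ →ₗ[ℤ] ℤ) :
    ∃ (m : ℕ) (μ : Fin m → (tZ →ₗ[ℤ] ℤ)),
      (∀ k, IsCocircuit γ (μ k) ∧ Supp γ (μ k) ⊆ Supp γ lam) ∧
      lam = ∑ k, μ k :=
  stmt0_general tZ n γ hsemigroup lam
end

section
/- With the setup of the previous statement, and additionally assuming unimodularity (any subset of the γ_i that is a basis over the field is a basis of the lattice, so cocircuits take values in {-1,0,1} on each coordinate), every λ in the dual lattice can be written as a cancellation-free sum λ = μ¹ + ... + μᵐ of cocircuits supported in Supp(λ), meaning μᵏ_i μˡ_i ≥ 0 for all indices i, k, l. -/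
open scoped BigOperators

/-!
Every nonzero `lam` has a conforming element `μ` of minimal support: take any `μ` of minimal
support inside `Supp lam`; if `μ` has both signs relative to `lam`, a positive combination of
`lam` and `μ` conforms to `lam` and has strictly smaller support, so recurse. Unimodularity makes
every element of minimal support a positive multiple of a `{-1, 0, 1}`-valued one `ν`: a maximal
independent set of the `γ i` off the support, completed by one index `j` of the support, is a
lattice basis, and `ν` is the coordinate functional of `γ j`. Then `lam - ν` still conforms to
`lam` and has smaller norm `∑ |lam (γ i)|`; induct.
-/

namespace Int

theorem sub_mul_pos_of_abs_le {a b : ℤ} (hab : a ≠ 0 → 0 < a * b) (hle : |a| ≤ |b|)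
    (hne : b - a ≠ 0) : 0 < (b - a) * b := by
  rcases eq_or_ne a 0 with rfl | ha
  · simpa using hne
  rcases pos_and_pos_or_neg_and_neg_of_mul_pos (hab ha) with ⟨ha, hb⟩ | ⟨ha, hb⟩
  · rw [abs_of_pos ha, abs_of_pos hb] at hle
    exact mul_pos (by omega) hb
  · rw [abs_of_neg ha, abs_of_neg hb] at hle
    exact mul_pos_of_neg_of_neg (by omega) hb

theorem natAbs_sub_add_natAbs_of_abs_le {a b : ℤ} (hab : a ≠ 0 → 0 < a * b)
    (hle : |a| ≤ |b|) : (b - a).natAbs + a.natAbs = b.natAbs := by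
  rcases eq_or_ne a 0 with rfl | ha
  · simp
  rcases pos_and_pos_or_neg_and_neg_of_mul_pos (hab ha) with ⟨ha, hb⟩ | ⟨ha, hb⟩
  · rw [abs_of_pos ha, abs_of_pos hb] at hle
    omega
  · rw [abs_of_neg ha, abs_of_neg hb] at hle
    omega

/-- `i₀` minimises `|y i| / |x i|` over the indices where `x i` and `y i` have the same sign. -/
theorem exists_forall_mul_mul_le {ι : Type*} [Fintype ι] (x y : ι → ℤ)
    (h : ∃ i, 0 < x i * y i) :
    ∃ i₀, 0 < x i₀ * y i₀ ∧ ∀ i, |y i₀| * (x i * y i) ≤ |x i₀| * y i ^ 2 := by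
  classical
  set A := Finset.univ.filter fun i => 0 < x i * y i
  obtain ⟨i₀, hi₀, hratio⟩ := A.exists_min_image (fun i => (|y i| : ℚ) / |x i|)
    (by simpa [A, Finset.Nonempty] using h)
  have hxy₀ : 0 < x i₀ * y i₀ := (Finset.mem_filter.1 hi₀).2
  refine ⟨i₀, hxy₀, fun i => ?_⟩
  rcases le_or_gt (x i * y i) 0 with hi | hi
  · nlinarith [abs_nonneg (y i₀), abs_nonneg (x i₀), sq_nonneg (y i)]
  have hq := hratio i (Finset.mem_filter.2 ⟨Finset.mem_univ i, hi⟩)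
  have hx₀ : x i₀ ≠ 0 := left_ne_zero_of_mul hxy₀.ne'
  have hxi : x i ≠ 0 := left_ne_zero_of_mul hi.ne'
  rw [div_le_div_iff₀ (by positivity) (by positivity)] at hq
  have hz : |y i₀| * |x i| ≤ |y i| * |x i₀| := by exact_mod_cast hq
  calc |y i₀| * (x i * y i) ≤ |y i₀| * |x i| * |y i| := by
        rw [mul_assoc, ← abs_mul]; exact mul_le_mul_of_nonneg_left (le_abs_self _) (abs_nonneg _)
    _ ≤ |y i| * |x i₀| * |y i| := mul_le_mul_of_nonneg_right hz (abs_nonneg _)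
    _ = |x i₀| * y i ^ 2 := by rw [← sq_abs (y i)]; ring

end Int

theorem exists_dual_ne_zero_of_forall_smul_notMem {M : Type*} [AddCommGroup M]
    [Module.Finite ℤ M] {N : Submodule ℤ M} {x : M} (hx : ∀ d : ℤ, d ≠ 0 → d • x ∉ N) :
    ∃ φ : M →ₗ[ℤ] ℤ, N ≤ LinearMap.ker φ ∧ φ x ≠ 0 := by
  set T := Submodule.torsion ℤ (M ⧸ N)
  set π := T.mkQ ∘ₗ N.mkQ
  have hπx : π x ≠ 0 := by
    intro h
    obtain ⟨d, hd⟩ := (Submodule.mem_torsion_iff _).1 ((Submodule.Quotient.mk_eq_zero T).1 h)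
    refine hx d (nonZeroDivisors.ne_zero d.2) ?_
    rwa [Submodule.mkQ_apply, ← Submodule.Quotient.mk_smul, Submodule.Quotient.mk_eq_zero] at hd
  -- `(M ⧸ N) ⧸ T` is finitely generated and torsion-free over `ℤ`, hence free
  obtain ⟨ψ, hψ⟩ := not_forall.1 (mt (Module.forall_dual_apply_eq_zero_iff ℤ (π x)).1 hπx)
  refine ⟨ψ ∘ₗ π, fun y hy => ?_, hψ⟩
  simp [π, (Submodule.Quotient.mk_eq_zero N).2 hy]

theorem smul_mem_of_forall_smul_mem {M ι : Type*} [AddCommGroup M] {γ : ι → M}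
    (hspan : Submodule.span ℤ (Set.range γ) = ⊤) {N : Submodule ℤ M}
    (h : ∀ j, ∃ d : ℤ, d ≠ 0 ∧ d • γ j ∈ N) (v : M) : ∃ d : ℤ, d ≠ 0 ∧ d • v ∈ N := by
  have hv : v ∈ Submodule.span ℤ (Set.range γ) := hspan ▸ Submodule.mem_top
  induction hv using Submodule.span_induction with
  | mem x hx => obtain ⟨j, rfl⟩ := hx; exact h j
  | zero => exact ⟨1, one_ne_zero, by simp⟩
  | add x y _ _ hx hy =>
    obtain ⟨d₁, hd₁, h₁⟩ := hx
    obtain ⟨d₂, hd₂, h₂⟩ := hy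
    refine ⟨d₂ * d₁, mul_ne_zero hd₂ hd₁, ?_⟩
    rw [smul_add, mul_smul, mul_comm, mul_smul]
    exact N.add_mem (N.smul_mem _ h₁) (N.smul_mem _ h₂)
  | smul a x _ hx =>
    obtain ⟨d, hd, hdx⟩ := hx
    exact ⟨d, hd, by rw [smul_comm]; exact N.smul_mem a hdx⟩

theorem LinearIndepOn.insert_of_dual {R M ι : Type*} [Ring R] [IsDomain R] [AddCommGroup M]
    [Module R M] {γ : ι → M} {I : Set ι} (hI : LinearIndepOn R γ I) {φ : M →ₗ[R] R}
    (hφ : ∀ i ∈ I, φ (γ i) = 0) {j : ι} (hj : φ (γ j) ≠ 0) :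
    LinearIndepOn R γ (insert j I) :=
  hI.insert' fun r hr => by
    have hker : Submodule.span R (γ '' I) ≤ LinearMap.ker φ :=
      Submodule.span_le.2 (Set.image_subset_iff.2 hφ)
    simpa [hj] using hker hr

theorem exists_linearIndepOn_subset_smul_mem_span (R : Type*) {M ι : Type*} [Ring R]
    [Nontrivial R] [AddCommGroup M] [Module R M] (γ : ι → M) (Z : Set ι) :
    ∃ I ⊆ Z, LinearIndepOn R γ I ∧
      ∀ j ∈ Z, ∃ d : R, d ≠ 0 ∧ d • γ j ∈ Submodule.span R (γ '' I) := by
  classical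
  obtain ⟨I, hI, hmax⟩ := exists_maximal_linearIndepOn R (Z.indicator γ)
  have hIZ : I ⊆ Z := fun i hi => by_contra fun hiZ => hI.ne_zero hi (by simp [hiZ])
  have heq : Set.EqOn (Z.indicator γ) γ I := fun i hi => Set.indicator_of_mem (hIZ hi) γ
  refine ⟨I, hIZ, hI.congr heq, fun j hj => ?_⟩
  by_cases hjI : j ∈ I
  · exact ⟨1, one_ne_zero, by simpa using Submodule.subset_span (Set.mem_image_of_mem γ hjI)⟩
  obtain ⟨d, hd, hmem⟩ := hmax j hjI
  rw [Set.indicator_of_mem hj, heq.image_eq] at hmem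
  exact ⟨d, hd, hmem⟩

theorem exists_dual_eq_one_of_span_insert_eq_top {R M ι : Type*} [CommRing R] [AddCommGroup M]
    [Module R M] {γ : ι → M} {I : Set ι} {j : ι} (hj : j ∉ I)
    (hli : LinearIndepOn R γ (insert j I)) (htop : Submodule.span R (γ '' insert j I) = ⊤) :
    ∃ ν : M →ₗ[R] R, ν (γ j) = 1 ∧ ∀ i ∈ I, ν (γ i) = 0 := by
  have hsp : ⊤ ≤ Submodule.span R (Set.range fun i : ↥(insert j I) => γ i) := by
    rw [← Set.image_eq_range, htop]
  set b := Module.Basis.mk hli hsp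
  have hb : ∀ (i : ι) (hi : i ∈ insert j I), γ i = b ⟨i, hi⟩ := fun i hi =>
    (Module.Basis.mk_apply hli hsp ⟨i, hi⟩).symm
  refine ⟨b.coord ⟨j, Set.mem_insert j I⟩, ?_, fun i hi => ?_⟩
  · rw [hb j (Set.mem_insert j I), Module.Basis.coord_apply, Module.Basis.repr_self,
      Finsupp.single_eq_same]
  · rw [hb i (Set.mem_insert_of_mem j hi), Module.Basis.coord_apply, Module.Basis.repr_self,
      Finsupp.single_eq_of_ne]
    intro h
    simp only [Subtype.mk.injEq] at h
    exact hj (h ▸ hi)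

namespace Cocircuit

variable {M : Type} [AddCommGroup M] {n : ℕ} {γ : Fin n → M}

def HasMinimalSupport (γ : Fin n → M) (μ : M →ₗ[ℤ] ℤ) : Prop :=
  ∀ ν : M →ₗ[ℤ] ℤ, ν ≠ 0 → Supp γ ν ⊆ Supp γ μ → Supp γ ν = Supp γ μ

def Conforms (γ : Fin n → M) (μ lam : M →ₗ[ℤ] ℤ) : Prop :=
  ∀ i, μ (γ i) ≠ 0 → 0 < μ (γ i) * lam (γ i)

def IsUnimodular (γ : Fin n → M) : Prop :=
  ∀ s : Set (Fin n), LinearIndepOn ℤ γ s →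
    (∀ v : M, ∃ d : ℤ, d ≠ 0 ∧ d • v ∈ Submodule.span ℤ (γ '' s)) →
    Submodule.span ℤ (γ '' s) = ⊤

theorem supp_smul {c : ℤ} (hc : c ≠ 0) (μ : M →ₗ[ℤ] ℤ) : Supp γ (c • μ) = Supp γ μ := by
  ext i
  simp [Supp, hc]

theorem supp_nonempty (hspan : Submodule.span ℤ (Set.range γ) = ⊤) {μ : M →ₗ[ℤ] ℤ}
    (hμ : μ ≠ 0) : (Supp γ μ).Nonempty := by
  by_contra h
  refine hμ (LinearMap.ext_on_range hspan fun i => ?_)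
  by_contra hi
  exact h ⟨i, hi⟩

theorem hasMinimalSupport_smul_iff {μ : M →ₗ[ℤ] ℤ} {c : ℤ} (hc : c ≠ 0) :
    HasMinimalSupport γ (c • μ) ↔ HasMinimalSupport γ μ := by
  rw [HasMinimalSupport, HasMinimalSupport, supp_smul hc]

theorem Conforms.supp_subset {μ lam : M →ₗ[ℤ] ℤ} (h : Conforms γ μ lam) :
    Supp γ μ ⊆ Supp γ lam := fun i hi hlam => by
  simpa [hlam] using h i hi

theorem conforms_of_mul_nonneg {μ lam : M →ₗ[ℤ] ℤ} (hsub : Supp γ μ ⊆ Supp γ lam)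
    (h : ∀ i, 0 ≤ μ (γ i) * lam (γ i)) : Conforms γ μ lam := fun i hi =>
  (h i).lt_of_ne (mul_ne_zero hi (hsub hi)).symm

theorem Conforms.trans {μ ν lam : M →ₗ[ℤ] ℤ} (h₁ : Conforms γ μ ν) (h₂ : Conforms γ ν lam) :
    Conforms γ μ lam := fun i hi => by
  have hμν := h₁ i hi
  have hνlam := h₂ i (right_ne_zero_of_mul hμν.ne')
  nlinarith [mul_pos hμν hνlam, sq_nonneg (ν (γ i))]

theorem Conforms.mul_nonneg {μ ν lam : M →ₗ[ℤ] ℤ} (hμ : Conforms γ μ lam)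
    (hν : Conforms γ ν lam) (i : Fin n) : 0 ≤ μ (γ i) * ν (γ i) := by
  by_cases hμi : μ (γ i) = 0
  · simp [hμi]
  by_cases hνi : ν (γ i) = 0
  · simp [hνi]
  nlinarith [mul_pos (hμ i hμi) (hν i hνi), sq_nonneg (lam (γ i))]

theorem Conforms.of_smul {ν lam : M →ₗ[ℤ] ℤ} {c : ℤ} (hc : 0 < c) (h : Conforms γ (c • ν) lam) :
    Conforms γ ν lam := fun i hi => by
  have := h i (by simpa [hc.ne'] using hi)
  simp only [LinearMap.smul_apply, smul_eq_mul, mul_assoc] at this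
  exact pos_of_mul_pos_right this hc.le

theorem Conforms.sub {ν lam : M →ₗ[ℤ] ℤ} (h : Conforms γ ν lam)
    (hle : ∀ i, |ν (γ i)| ≤ |lam (γ i)|) : Conforms γ (lam - ν) lam := fun i hi =>
  Int.sub_mul_pos_of_abs_le (h i) (hle i) hi

theorem Conforms.sum_natAbs_sub_lt {ν lam : M →ₗ[ℤ] ℤ} (h : Conforms γ ν lam)
    (hle : ∀ i, |ν (γ i)| ≤ |lam (γ i)|) (hν : (Supp γ ν).Nonempty) :
    ∑ i, ((lam - ν) (γ i)).natAbs < ∑ i, (lam (γ i)).natAbs := by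
  have hsplit := fun i => Int.natAbs_sub_add_natAbs_of_abs_le (h i) (hle i)
  obtain ⟨i, hi⟩ := hν
  refine Finset.sum_lt_sum (fun j _ => ?_) ⟨i, Finset.mem_univ i, ?_⟩
  · simpa using (hsplit j).le.trans' (Nat.le_add_right _ _)
  · have := hsplit i
    have : (ν (γ i)).natAbs ≠ 0 := Int.natAbs_ne_zero.2 hi
    simp only [LinearMap.sub_apply]
    omega

theorem exists_hasMinimalSupport_subset {lam : M →ₗ[ℤ] ℤ} (hlam : lam ≠ 0) :
    ∃ μ, μ ≠ 0 ∧ Supp γ μ ⊆ Supp γ lam ∧ HasMinimalSupport γ μ := by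
  obtain ⟨S, hS, ⟨μ, hμ, rfl⟩, hmin⟩ := exists_minimal_le_of_wellFoundedLT
    (fun S => ∃ μ : M →ₗ[ℤ] ℤ, μ ≠ 0 ∧ Supp γ μ = S) _ ⟨lam, hlam, rfl⟩
  exact ⟨μ, hμ, hS, fun ν hν hνμ => hνμ.antisymm (hmin ⟨ν, hν, rfl⟩ hνμ)⟩

/-- Elimination step: with `i₀` from `Int.exists_forall_mul_mul_le`, the positive combination
`|μ i₀| • lam - |lam i₀| • μ` conforms to `lam` and vanishes at `i₀`. -/
theorem exists_conforms_supp_ssubset {μ lam : M →ₗ[ℤ] ℤ} (hsub : Supp γ μ ⊆ Supp γ lam)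
    (hpos : ∃ i, 0 < μ (γ i) * lam (γ i)) (hneg : ∃ i, μ (γ i) * lam (γ i) < 0) :
    ∃ lam', lam' ≠ 0 ∧ Conforms γ lam' lam ∧ Supp γ lam' ⊂ Supp γ lam := by
  obtain ⟨i₀, hab, hkey⟩ :=
    Int.exists_forall_mul_mul_le (fun i => μ (γ i)) (fun i => lam (γ i)) hpos
  set a := μ (γ i₀)
  set b := lam (γ i₀)
  have hb : b ≠ 0 := right_ne_zero_of_mul hab.ne'
  set lam' := |a| • lam - |b| • μ
  have hval : ∀ i, lam' (γ i) = |a| * lam (γ i) - |b| * μ (γ i) := fun i => by simp [lam']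
  have hsub' : Supp γ lam' ⊆ Supp γ lam := fun i hi hlam => hi <| by
    rw [hval, hlam, show μ (γ i) = 0 from not_not.1 fun h => hsub h hlam]; ring
  have hconf : Conforms γ lam' lam :=
    conforms_of_mul_nonneg hsub' fun i => by rw [hval]; nlinarith [hkey i]
  obtain ⟨i₁, hi₁⟩ := hneg
  have hi₀' : lam' (γ i₀) = 0 := by
    rw [hval]
    rcases pos_and_pos_or_neg_and_neg_of_mul_pos hab with ⟨ha, hb⟩ | ⟨ha, hb⟩
    · rw [abs_of_pos ha, abs_of_pos hb]; ring
    · rw [abs_of_neg ha, abs_of_neg hb]; ring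
  refine ⟨lam', fun h => ?_, hconf, (Set.ssubset_iff_of_subset hsub').2 ⟨i₀, hb, fun h => h hi₀'⟩⟩
  · have : lam' (γ i₁) * lam (γ i₁) = 0 := by simp [h]
    rw [hval] at this
    nlinarith [mul_pos (abs_pos.2 hb) (neg_pos.2 hi₁),
      mul_nonneg (abs_nonneg a) (sq_nonneg (lam (γ i₁)))]

theorem exists_mul_neg_of_not_conforms {μ lam : M →ₗ[ℤ] ℤ} (hsub : Supp γ μ ⊆ Supp γ lam)
    (h : ¬ Conforms γ μ lam) : ∃ i, μ (γ i) * lam (γ i) < 0 := by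
  simp only [Conforms, not_forall, not_lt] at h
  obtain ⟨i, hi, hle⟩ := h
  exact ⟨i, hle.lt_of_ne (mul_ne_zero hi (hsub hi))⟩

theorem exists_conforms_hasMinimalSupport (hspan : Submodule.span ℤ (Set.range γ) = ⊤)
    {lam : M →ₗ[ℤ] ℤ} (hlam : lam ≠ 0) :
    ∃ μ, μ ≠ 0 ∧ Conforms γ μ lam ∧ HasMinimalSupport γ μ := by
  obtain ⟨μ, hμ, hsub, hmin⟩ := exists_hasMinimalSupport_subset hlam
  by_cases hc : Conforms γ μ lam
  · exact ⟨μ, hμ, hc, hmin⟩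
  by_cases hc' : Conforms γ ((-1 : ℤ) • μ) lam
  · exact ⟨_, smul_ne_zero (by norm_num) hμ, hc',
      (hasMinimalSupport_smul_iff (by norm_num)).2 hmin⟩
  obtain ⟨i₁, hi₁⟩ := exists_mul_neg_of_not_conforms hsub hc
  obtain ⟨i₂, hi₂⟩ := exists_mul_neg_of_not_conforms (by rwa [supp_smul (by norm_num)]) hc'
  simp only [neg_smul, one_smul, LinearMap.neg_apply, neg_mul] at hi₂
  obtain ⟨lam', hlam', hconf, hss⟩ :=
    exists_conforms_supp_ssubset hsub ⟨i₂, by linarith⟩ ⟨i₁, hi₁⟩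
  obtain ⟨ν, hν, hνc, hνmin⟩ := exists_conforms_hasMinimalSupport hspan hlam'
  exact ⟨ν, hν, hνc.trans hconf, hνmin⟩
termination_by (Supp γ lam).ncard
decreasing_by exact Set.ncard_lt_ncard hss

/-- `insert j I` spans rationally: otherwise some functional vanishing on it would have support
strictly inside `Supp μ`. -/
theorem span_insert_eq_top (hspan : Submodule.span ℤ (Set.range γ) = ⊤)
    (hunimod : IsUnimodular γ) {μ : M →ₗ[ℤ] ℤ} (hmin : HasMinimalSupport γ μ) {I : Set (Fin n)}
    (hsat : ∀ j ∉ Supp γ μ, ∃ d : ℤ, d ≠ 0 ∧ d • γ j ∈ Submodule.span ℤ (γ '' I))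
    {j : Fin n} (hli : LinearIndepOn ℤ γ (insert j I)) (hj : j ∈ Supp γ μ) :
    Submodule.span ℤ (γ '' insert j I) = ⊤ := by
  have : Module.Finite ℤ M :=
    Module.Finite.of_fg_top (Submodule.fg_iff_exists_fin_generating_family.2 ⟨n, γ, hspan⟩)
  have hIsub : Submodule.span ℤ (γ '' I) ≤ Submodule.span ℤ (γ '' insert j I) :=
    Submodule.span_mono (Set.image_mono (Set.subset_insert j I))
  refine hunimod _ hli (smul_mem_of_forall_smul_mem hspan fun k => ?_)
  by_cases hk : k ∈ Supp γ μ
  swap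
  · obtain ⟨d, hd, hmem⟩ := hsat k hk
    exact ⟨d, hd, hIsub hmem⟩
  by_contra! hno
  obtain ⟨φ, hφ, hφk⟩ := exists_dual_ne_zero_of_forall_smul_notMem hno
  have hsupp : Supp γ φ ⊆ Supp γ μ := fun i hi => by
    by_contra hiμ
    obtain ⟨d, hd, hmem⟩ := hsat i hiμ
    have : φ (d • γ i) = 0 := hφ (hIsub hmem)
    rw [map_smul, smul_eq_mul] at this
    exact hi ((mul_eq_zero.1 this).resolve_left hd)
  have hφ0 : φ ≠ 0 := fun h => hφk (by simp [h])
  have hφj : φ (γ j) = 0 :=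
    hφ (Submodule.subset_span (Set.mem_image_of_mem γ (Set.mem_insert j I)))
  exact (hmin φ hφ0 hsupp ▸ hj) hφj

theorem exists_smul_eq_of_hasMinimalSupport (hspan : Submodule.span ℤ (Set.range γ) = ⊤)
    (hunimod : IsUnimodular γ) {μ : M →ₗ[ℤ] ℤ} (hμ : μ ≠ 0) (hmin : HasMinimalSupport γ μ) :
    ∃ (c : ℤ) (ν : M →ₗ[ℤ] ℤ), 0 < c ∧ μ = c • ν ∧ ∀ i, |ν (γ i)| ≤ 1 := by
  obtain ⟨j₀, hj₀⟩ := supp_nonempty hspan hμ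
  obtain ⟨I, hIμ, hI, hsat⟩ := exists_linearIndepOn_subset_smul_mem_span ℤ γ (Supp γ μ)ᶜ
  have hins : ∀ j ∈ Supp γ μ, LinearIndepOn ℤ γ (insert j I) := fun j hj =>
    hI.insert_of_dual (φ := μ) (fun i hi => not_not.1 (hIμ hi)) hj
  have htop : ∀ j ∈ Supp γ μ, Submodule.span ℤ (γ '' insert j I) = ⊤ := fun j hj =>
    span_insert_eq_top hspan hunimod hmin hsat (hins j hj) hj
  obtain ⟨ν, hνj₀, hνI⟩ :=
    exists_dual_eq_one_of_span_insert_eq_top (fun h => hIμ h hj₀) (hins j₀ hj₀) (htop j₀ hj₀)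
  have hνspan : Submodule.span ℤ (γ '' I) ≤ LinearMap.ker ν :=
    Submodule.span_le.2 (Set.image_subset_iff.2 hνI)
  have hνoff : ∀ i ∉ Supp γ μ, ν (γ i) = 0 := fun i hi => by
    obtain ⟨d, hd, hmem⟩ := hsat i hi
    have : ν (d • γ i) = 0 := hνspan hmem
    rw [map_smul, smul_eq_mul] at this
    exact (mul_eq_zero.1 this).resolve_left hd
  -- `γ j₀ ≡ a • γ i` modulo the span of `γ '' I`, so `1 = a * ν (γ i)`
  have hνunit : ∀ i ∈ Supp γ μ, IsUnit (ν (γ i)) := fun i hi => by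
    have hmem : γ j₀ ∈ Submodule.span ℤ (insert (γ i) (γ '' I)) := by
      rw [← Set.image_insert_eq, htop i hi]
      exact Submodule.mem_top
    obtain ⟨a, z, hz, hj₀eq⟩ := Submodule.mem_span_insert.1 hmem
    have := congrArg ν hj₀eq
    rw [hνj₀, map_add, map_smul, hνspan hz, smul_eq_mul, add_zero] at this
    exact IsUnit.of_mul_eq_one_right a this.symm
  have hν1 : ∀ i, |ν (γ i)| ≤ 1 := fun i => by
    by_cases hi : i ∈ Supp γ μ
    · rw [Int.isUnit_iff_abs_eq.1 (hνunit i hi)]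
    · simp [hνoff i hi]
  have hprop : μ = μ (γ j₀) • ν := by
    by_contra hne
    have hsub : Supp γ (μ - μ (γ j₀) • ν) ⊆ Supp γ μ := fun i hi => by
      by_contra hiμ
      exact hi (by simp [not_not.1 hiμ, hνoff i hiμ])
    have hj₀' : j₀ ∉ Supp γ (μ - μ (γ j₀) • ν) := by simp [Supp, hνj₀]
    exact hj₀' (hmin _ (sub_ne_zero.2 hne) hsub ▸ hj₀)
  rcases (show μ (γ j₀) ≠ 0 from hj₀).lt_or_gt with hneg | hpos
  · exact ⟨-μ (γ j₀), -ν, by omega, by rwa [neg_smul_neg], by simpa using hν1⟩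
  · exact ⟨μ (γ j₀), ν, hpos, hprop, hν1⟩

theorem isCocircuit_of_abs_le_one (hspan : Submodule.span ℤ (Set.range γ) = ⊤)
    {ν : M →ₗ[ℤ] ℤ} (hν : ν ≠ 0) (hmin : HasMinimalSupport γ ν) (h1 : ∀ i, |ν (γ i)| ≤ 1) :
    IsCocircuit γ ν := by
  refine ⟨hν, fun d ρ hνρ => ?_, hmin⟩
  obtain ⟨i, hi⟩ := supp_nonempty hspan hν
  have hunit : IsUnit (ν (γ i)) :=
    Int.isUnit_iff_abs_eq.2 ((h1 i).antisymm (Int.one_le_abs hi))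
  exact isUnit_of_dvd_unit ⟨ρ (γ i), by simp [hνρ]⟩ hunit

theorem exists_sum_eq_of_conforms (hspan : Submodule.span ℤ (Set.range γ) = ⊤)
    (hunimod : IsUnimodular γ) (lam : M →ₗ[ℤ] ℤ) :
    ∃ (m : ℕ) (μ : Fin m → M →ₗ[ℤ] ℤ),
      (∀ k, IsCocircuit γ (μ k) ∧ Conforms γ (μ k) lam) ∧ lam = ∑ k, μ k := by
  by_cases hlam : lam = 0
  · exact ⟨0, Fin.elim0, fun k => k.elim0, by simp [hlam]⟩
  obtain ⟨μ, hμ, hμc, hmin⟩ := exists_conforms_hasMinimalSupport hspan hlam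
  obtain ⟨c, ν, hc, rfl, hν1⟩ := exists_smul_eq_of_hasMinimalSupport hspan hunimod hμ hmin
  have hν : ν ≠ 0 := right_ne_zero_of_smul hμ
  have hνc : Conforms γ ν lam := hμc.of_smul hc
  have hle : ∀ i, |ν (γ i)| ≤ |lam (γ i)| := fun i => by
    by_cases hi : ν (γ i) = 0
    · simp [hi]
    exact (hν1 i).trans (Int.one_le_abs (hνc.supp_subset hi))
  obtain ⟨m, ρ, hρ, hsum⟩ := exists_sum_eq_of_conforms hspan hunimod (lam - ν)
  refine ⟨m + 1, Fin.cons ν ρ, fun k => ?_, by rw [Fin.sum_cons, ← hsum, add_sub_cancel]⟩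
  cases k using Fin.cases with
  | zero =>
    exact ⟨isCocircuit_of_abs_le_one hspan hν ((hasMinimalSupport_smul_iff hc.ne').1 hmin) hν1,
      hνc⟩
  | succ k => exact ⟨(hρ k).1, (hρ k).2.trans (hνc.sub hle)⟩
termination_by ∑ i, (lam (γ i)).natAbs
decreasing_by exact hνc.sum_natAbs_sub_lt hle (supp_nonempty hspan hν)

end Cocircuit

theorem stmt1_general (tZ : Type) [AddCommGroup tZ]
    (n : ℕ) (γ : Fin n → tZ)
    (hsemigroup : ∀ v : tZ, ∃ c : Fin n → ℕ, v = ∑ j, (c j : ℤ) • γ j)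
    -- unimodularity: a subset of the `γ i` that is linearly independent and spans
    -- rationally (i.e. is a basis over the field) spans the lattice over ℤ
    (hunimod : ∀ s : Set (Fin n),
      LinearIndependent ℤ (fun i : s => γ (i : Fin n)) →
      (∀ v : tZ, ∃ d : ℤ, d ≠ 0 ∧ d • v ∈ Submodule.span ℤ (γ '' s)) →
      Submodule.span ℤ (γ '' s) = ⊤)
    (lam : tZ →ₗ[ℤ] ℤ) :
    ∃ (m : ℕ) (μ : Fin m → (tZ →ₗ[ℤ] ℤ)),
      (∀ k, IsCocircuit γ (μ k) ∧ Supp γ (μ k) ⊆ Supp γ lam) ∧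
      lam = ∑ k, μ k ∧
      -- cancellation-free: coordinates of the summands never have opposite signs
      ∀ (i : Fin n) (k l : Fin m), 0 ≤ (μ k) (γ i) * (μ l) (γ i) := by
  have hspan : Submodule.span ℤ (Set.range γ) = ⊤ := Submodule.eq_top_iff'.2 fun v => by
    obtain ⟨c, rfl⟩ := hsemigroup v
    exact Submodule.sum_mem _ fun j _ => Submodule.smul_mem _ _ (Submodule.subset_span ⟨j, rfl⟩)
  obtain ⟨m, μ, hμ, hsum⟩ := Cocircuit.exists_sum_eq_of_conforms hspan hunimod lam
  exact ⟨m, μ, fun k => ⟨(hμ k).1, (hμ k).2.supp_subset⟩, hsum,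
    fun i k l => (hμ k).2.mul_nonneg (hμ l).2 i⟩

/-- Assuming unimodularity (any subset of the `γ i` that is a basis over the field is a
basis of the lattice), every `lam` in the dual lattice is a cancellation-free sum of
cocircuits supported in `Supp lam`. -/
theorem stmt1 (tZ : Type) [AddCommGroup tZ] [Module.Free ℤ tZ] [Module.Finite ℤ tZ]
    (n : ℕ) (γ : Fin n → tZ)
    (hne : ∀ i, γ i ≠ 0)
    (hprim : ∀ i, ∀ (c : ℤ) (w : tZ), γ i = c • w → IsUnit c)
    (hspanother : ∀ i, ∃ (d : ℤ) (c : Fin n → ℤ), d ≠ 0 ∧ c i = 0 ∧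
      d • γ i = ∑ j, c j • γ j)
    (hsemigroup : ∀ v : tZ, ∃ c : Fin n → ℕ, v = ∑ j, (c j : ℤ) • γ j)
    -- unimodularity: a subset of the `γ i` that is linearly independent and spans
    -- rationally (i.e. is a basis over the field) spans the lattice over ℤ
    (hunimod : ∀ s : Set (Fin n),
      LinearIndependent ℤ (fun i : s => γ (i : Fin n)) →
      (∀ v : tZ, ∃ d : ℤ, d ≠ 0 ∧ d • v ∈ Submodule.span ℤ (γ '' s)) →
      Submodule.span ℤ (γ '' s) = ⊤)
    (lam : tZ →ₗ[ℤ] ℤ) :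
    ∃ (m : ℕ) (μ : Fin m → (tZ →ₗ[ℤ] ℤ)),
      (∀ k, IsCocircuit γ (μ k) ∧ Supp γ (μ k) ⊆ Supp γ lam) ∧
      lam = ∑ k, μ k ∧
      -- cancellation-free: coordinates of the summands never have opposite signs
      ∀ (i : Fin n) (k l : Fin m), 0 ≤ (μ k) (γ i) * (μ l) (γ i) :=
  stmt1_general tZ n γ hsemigroup hunimod lam
end

section
/- Let X and Y be smooth affine varieties over C and f : X → Y a dominant morphism of relative dimension zero. If d is an algebraic differential operator on X such that d·g = 0 for every regular function g on Y (viewed as a function on X via pullback), then d = 0. -/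
/-- Grothendieck's inductive definition of differential operators of order at most `k`
on a commutative `ℂ`-algebra `A` (as `ℂ`-linear endomorphisms):
order `≤ 0` means commuting with all multiplication operators, and
order `≤ k+1` means all commutators with multiplication operators have order `≤ k`. -/
def IsDiffOpLE (A : Type) [CommRing A] [Algebra ℂ A] : ℕ → (A →ₗ[ℂ] A) → Prop
  | 0, d => ∀ a : A, d.comp (LinearMap.mulLeft ℂ a) = (LinearMap.mulLeft ℂ a).comp d
  | k+1, d => ∀ a : A,
      IsDiffOpLE A k (d.comp (LinearMap.mulLeft ℂ a) - (LinearMap.mulLeft ℂ a).comp d)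


section Aux

variable {B A : Type} [CommRing B] [CommRing A] [IsDomain B] [IsDomain A]
    [Algebra ℂ B] [Algebra ℂ A] [Algebra B A] [IsScalarTower ℂ B A]

/-- Chain rule for a derivation killing `B`, applied to `aeval x p`. -/
lemma aux_deriv_aeval (δ : A →ₗ[ℂ] A)
    (hleib : ∀ x y : A, δ (x * y) = x * δ y + y * δ x)
    (hB : ∀ b : B, δ (algebraMap B A b) = 0) (x : A) (p : Polynomial B) :
    δ (Polynomial.aeval x p) = Polynomial.aeval x (Polynomial.derivative p) * δ x := by
  have hpow : ∀ n : ℕ, δ (x ^ (n + 1)) = (n + 1 : ℕ) * x ^ n * δ x := by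
    intro n
    induction n with
    | zero => simp
    | succ m ih =>
        have : x ^ (m + 2) = x * x ^ (m + 1) := by ring
        rw [this, hleib, ih]
        push_cast
        ring
  induction p using Polynomial.induction_on' with
  | add p q hp hq => simp [map_add, hp, hq, add_mul]
  | monomial n b =>
      cases n with
      | zero => simp [Polynomial.aeval_monomial, hB, hleib]
      | succ m =>
          rw [Polynomial.derivative_monomial]
          simp only [Polynomial.aeval_monomial, Nat.add_sub_cancel, Nat.cast_add, Nat.cast_one]
          rw [hleib, hpow, hB]
          push_cast
          ring
end Aux

section Aux2
set_option linter.unusedSectionVars false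

variable {B A : Type} [CommRing B] [CommRing A] [IsDomain B] [IsDomain A]
    [Algebra ℂ B] [Algebra ℂ A] [Algebra B A] [IsScalarTower ℂ B A]

/-- A `ℂ`-linear derivation on `A` killing (the image of) `B` is zero, since every
element of `A` is algebraic over `B`. -/
lemma aux_der_zero (hdominant : Function.Injective (algebraMap B A))
    (hreldimzero : ∀ x : A, IsAlgebraic B x) (δ : A →ₗ[ℂ] A)
    (hleib : ∀ x y : A, δ (x * y) = x * δ y + y * δ x)
    (hB : ∀ b : B, δ (algebraMap B A b) = 0) : δ = 0 := by
  haveI : CharZero B := charZero_of_injective_algebraMap (algebraMap ℂ B).injective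
  ext x
  obtain ⟨p, hp0, hpx⟩ := hreldimzero x
  simp only [LinearMap.zero_apply]
  -- strong induction on the degree of the annihilating polynomial
  have key : ∀ n : ℕ, ∀ p : Polynomial B, p ≠ 0 → p.natDegree ≤ n →
      Polynomial.aeval x p = 0 → δ x = 0 := by
    intro n
    induction n with
    | zero =>
        intro p hp hdeg hev
        exfalso
        rw [Polynomial.eq_C_of_natDegree_eq_zero (Nat.le_zero.mp hdeg),
          Polynomial.aeval_C] at hev
        have : p.coeff 0 = 0 := hdominant (by simpa using hev)
        exact hp (by
          rw [Polynomial.eq_C_of_natDegree_eq_zero (Nat.le_zero.mp hdeg), this, map_zero])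
    | succ n ih =>
        intro p hp hdeg hev
        by_cases hnd : p.natDegree = 0
        · exfalso
          rw [Polynomial.eq_C_of_natDegree_eq_zero hnd, Polynomial.aeval_C] at hev
          have : p.coeff 0 = 0 := hdominant (by simpa using hev)
          exact hp (by rw [Polynomial.eq_C_of_natDegree_eq_zero hnd, this, map_zero])
        · have hder0 : Polynomial.derivative p ≠ 0 := fun h =>
            hnd (Polynomial.natDegree_eq_zero_of_derivative_eq_zero h)
          have hform := aux_deriv_aeval δ hleib hB x p
          rw [hev, map_zero] at hform
          rcases mul_eq_zero.mp hform.symm with h | h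
          · exact ih (Polynomial.derivative p) hder0
              (by
                have := Polynomial.natDegree_derivative_lt hnd
                omega) h
          · exact h
  exact key p.natDegree p hp0 le_rfl hpx
end Aux2

section Aux3
set_option linter.unusedSectionVars false

variable {B A : Type} [CommRing B] [CommRing A] [IsDomain B] [IsDomain A]
    [Algebra ℂ B] [Algebra ℂ A] [Algebra B A] [IsScalarTower ℂ B A]

/-- A differential operator of order `≤ k` commuting with multiplication by every
element of `B` is multiplication by `d 1`. -/
lemma aux_P (hdominant : Function.Injective (algebraMap B A))
    (hreldimzero : ∀ x : A, IsAlgebraic B x) :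
    ∀ (k : ℕ) (d : A →ₗ[ℂ] A), IsDiffOpLE A k d →
      (∀ b : B, d.comp (LinearMap.mulLeft ℂ (algebraMap B A b))
          = (LinearMap.mulLeft ℂ (algebraMap B A b)).comp d) →
      d = LinearMap.mulLeft ℂ (d 1) := by
  intro k
  induction k with
  | zero =>
      intro d hd _
      ext x
      have := congrArg (fun f : A →ₗ[ℂ] A => f 1) (hd x)
      simpa [LinearMap.mulLeft_apply, mul_comm] using this
  | succ k ih =>
      intro d hd hBlin
      -- each commutator [d, x] is B-linear of order ≤ k, hence mult by its value at 1
      have hcomm : ∀ x y : A, d (x * y) = x * d y + y * (d x - x * d 1) := by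
        intro x y
        set e : A →ₗ[ℂ] A :=
          d.comp (LinearMap.mulLeft ℂ x) - (LinearMap.mulLeft ℂ x).comp d with he
        have heB : ∀ b : B, e.comp (LinearMap.mulLeft ℂ (algebraMap B A b))
            = (LinearMap.mulLeft ℂ (algebraMap B A b)).comp e := by
          intro b
          ext z
          have h1 := congrArg (fun f : A →ₗ[ℂ] A => f z) (hBlin b)
          have h2 := congrArg (fun f : A →ₗ[ℂ] A => f (x * z)) (hBlin b)
          simp only [LinearMap.comp_apply, LinearMap.mulLeft_apply] at h1 h2 ⊢
          simp only [he, LinearMap.sub_apply, LinearMap.comp_apply,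
            LinearMap.mulLeft_apply]
          rw [show x * (algebraMap B A b * z) = algebraMap B A b * (x * z) by ring, h2, h1]
          ring
        have := ih e (hd x) heB
        have hy := congrArg (fun f : A →ₗ[ℂ] A => f y) this
        simp only [he, LinearMap.sub_apply, LinearMap.comp_apply, LinearMap.mulLeft_apply,
          mul_one] at hy
        rw [sub_eq_iff_eq_add] at hy
        rw [hy]
        ring
      -- δ := d - mulLeft (d 1) is a derivation killing B
      set δ : A →ₗ[ℂ] A := d - LinearMap.mulLeft ℂ (d 1) with hδ
      have hleib : ∀ x y : A, δ (x * y) = x * δ y + y * δ x := by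
        intro x y
        simp only [hδ, LinearMap.sub_apply, LinearMap.mulLeft_apply]
        rw [hcomm x y]
        ring
      have hBkill : ∀ b : B, δ (algebraMap B A b) = 0 := by
        intro b
        have h1 := congrArg (fun f : A →ₗ[ℂ] A => f 1) (hBlin b)
        simp only [LinearMap.comp_apply, LinearMap.mulLeft_apply, mul_one] at h1
        simp only [hδ, LinearMap.sub_apply, LinearMap.mulLeft_apply, h1]
        ring
      have := aux_der_zero hdominant hreldimzero δ hleib hBkill
      rw [hδ, sub_eq_zero] at this
      exact this
end Aux3

/-- Let `X = Spec A` and `Y = Spec B` be smooth affine varieties over `ℂ` and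
`X → Y` a dominant morphism of relative dimension zero (so `O(Y) → O(X)` is injective
and every element of `O(X)` is algebraic over `O(Y)`).  If a differential operator `d`
on `X` kills every function pulled back from `Y`, then `d = 0`. -/
theorem stmt2 (B A : Type) [CommRing B] [CommRing A] [IsDomain B] [IsDomain A]
    [Algebra ℂ B] [Algebra ℂ A] [Algebra B A] [IsScalarTower ℂ B A]
    [Algebra.FormallySmooth ℂ B] [Algebra.FormallySmooth ℂ A]
    [Algebra.FiniteType ℂ B] [Algebra.FiniteType ℂ A]
    (hdominant : Function.Injective (algebraMap B A))
    (hreldimzero : ∀ x : A, IsAlgebraic B x)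
    (d : A →ₗ[ℂ] A) (k : ℕ) (hd : IsDiffOpLE A k d)
    (hann : ∀ b : B, d (algebraMap B A b) = 0) :
    d = 0 := by
  induction k generalizing d with
  | zero =>
      have := aux_P hdominant hreldimzero 0 d hd (fun b => hd (algebraMap B A b))
      have h1 : d 1 = 0 := by simpa using hann 1
      rw [this, h1, LinearMap.mulLeft_zero_eq_zero]
  | succ k ih =>
      have hBlin : ∀ b : B, d.comp (LinearMap.mulLeft ℂ (algebraMap B A b))
          = (LinearMap.mulLeft ℂ (algebraMap B A b)).comp d := by
        intro b
        have hek := hd (algebraMap B A b)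
        have heann : ∀ b' : B,
            (d.comp (LinearMap.mulLeft ℂ (algebraMap B A b))
              - (LinearMap.mulLeft ℂ (algebraMap B A b)).comp d) (algebraMap B A b') = 0 := by
          intro b'
          simp only [LinearMap.sub_apply, LinearMap.comp_apply, LinearMap.mulLeft_apply]
          rw [← map_mul, hann (b * b'), hann b', mul_zero, sub_zero]
        have := ih _ hek heann
        rwa [sub_eq_zero] at this
      have := aux_P hdominant hreldimzero (k + 1) d hd hBlin
      have h1 : d 1 = 0 := by simpa using hann 1
      rw [this, h1, LinearMap.mulLeft_zero_eq_zero]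
end

section
/- Let R be the C[ℏ]-algebra generated by a commutative polynomial part Sym(V) (V a finite-dimensional vector space with a linear functional assignment x ↦ x̄ ∈ t) and group-like elements q^λ for λ in a commutative monoid Λ ⊆ t*, with relations x q^λ = q^λ (x + ℏ⟨λ, x̄⟩). Then the multiplicative set 𝔖 generated by the elements (1 − q^λ), λ ∈ Σ₊ (a finite subset of Λ), satisfies the left Ore condition in R: for any s ∈ 𝔖 and r ∈ R there exist s' ∈ 𝔖 and r' ∈ R with s' r = r' s. -/
/-!
For a single generator `s = 1 - q^λ`, the elements `r` such that every `s ^ N` can be moved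
past `r` from the right at the cost of some power `s ^ M` on the left form a subalgebra.
It contains every `q^μ`, which commutes with `s`, and every `x ∈ V`, because
`s x = x s + ⟨λ, x̄⟩ ℏ q^λ` with a correction term commuting with `s`, so that
`s ^ (N + 1) x = (x s + (N + 1) ⟨λ, x̄⟩ ℏ q^λ) s ^ N`. As these generate `R`, the subalgebra is
everything, and the Ore condition passes from the generators `1 - q^λ` to the monoid they
generate.
-/

def IsLeftOre {M : Type*} [Monoid M] (S : Submonoid M) : Prop :=
  ∀ s ∈ S, ∀ r : M, ∃ s' ∈ S, ∃ r' : M, s' * r = r' * s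

theorem isLeftOre_closure {M : Type*} [Monoid M] {T : Set M}
    (hT : ∀ t ∈ T, ∀ r : M, ∃ s' ∈ Submonoid.closure T, ∃ r' : M, s' * r = r' * t) :
    IsLeftOre (Submonoid.closure T) := by
  intro s hs
  induction hs using Submonoid.closure_induction with
  | mem t ht => exact hT t ht
  | one => exact fun r ↦ ⟨1, one_mem _, r, by rw [one_mul, mul_one]⟩
  | mul s₁ s₂ _ _ ih₁ ih₂ =>
    intro r
    obtain ⟨t₂, ht₂, r₂, e₂⟩ := ih₂ r
    obtain ⟨t₁, ht₁, r₁, e₁⟩ := ih₁ r₂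
    exact ⟨t₁ * t₂, mul_mem ht₁ ht₂, r₁, by rw [mul_assoc, e₂, ← mul_assoc, e₁, mul_assoc]⟩

section PowOre

variable (K : Type*) {A : Type*} [CommSemiring K] [Semiring A] [Algebra K A]

def powOreSubalgebra (s : A) : Subalgebra K A where
  carrier := {r | ∀ N : ℕ, ∃ M : ℕ, ∃ r' : A, s ^ M * r = r' * s ^ N}
  mul_mem' {r₁ r₂} h₁ h₂ N := by
    obtain ⟨M₂, r₂', e₂⟩ := h₂ N
    obtain ⟨M₁, r₁', e₁⟩ := h₁ M₂
    exact ⟨M₁, r₁' * r₂', by rw [← mul_assoc, e₁, mul_assoc, e₂, ← mul_assoc]⟩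
  add_mem' {r₁ r₂} h₁ h₂ N := by
    obtain ⟨M₁, r₁', e₁⟩ := h₁ N
    obtain ⟨M₂, r₂', e₂⟩ := h₂ N
    have e₁' : s ^ (M₁ + M₂) * r₁ = s ^ M₂ * r₁' * s ^ N := by
      rw [add_comm, pow_add, mul_assoc, e₁, mul_assoc]
    have e₂' : s ^ (M₁ + M₂) * r₂ = s ^ M₁ * r₂' * s ^ N := by
      rw [pow_add, mul_assoc, e₂, mul_assoc]
    exact ⟨M₁ + M₂, s ^ M₂ * r₁' + s ^ M₁ * r₂', by rw [mul_add, e₁', e₂', add_mul]⟩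
  algebraMap_mem' c N := ⟨N, algebraMap K A c, (Algebra.commutes c _).symm⟩

variable {K}

theorem mem_powOreSubalgebra_of_commute {s r : A} (h : Commute s r) :
    r ∈ powOreSubalgebra K s :=
  fun N ↦ ⟨N, r, (h.pow_left N).eq⟩

theorem pow_succ_mul_of_mul_eq_add {s x a : A} (hx : s * x = x * s + a) (ha : Commute s a)
    (n : ℕ) : s ^ (n + 1) * x = (x * s + (n + 1) • a) * s ^ n := by
  induction n with
  | zero => simp [hx]
  | succ n ih =>
    rw [pow_succ', mul_assoc, ih, ← mul_assoc, mul_add, ← mul_assoc, hx, mul_smul_comm,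
      ha.eq, succ_nsmul _ (n + 1), pow_succ']
    simp only [add_mul, mul_assoc, smul_mul_assoc]
    abel

theorem mem_powOreSubalgebra_of_mul_eq_add {s x a : A} (hx : s * x = x * s + a)
    (ha : Commute s a) : x ∈ powOreSubalgebra K s :=
  fun N ↦ ⟨N + 1, _, pow_succ_mul_of_mul_eq_add hx ha N⟩

end PowOre

section OneSub

variable {K : Type*} {A : Type*} [CommRing K] [Ring A] [Algebra K A]

theorem one_sub_mul_eq_of_mul_eq {x h p : A} {c : K} (hhp : Commute h p)
    (hx : x * p = p * (x + c • h)) : (1 - p) * x = x * (1 - p) + c • (h * p) := by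
  rw [mul_add, mul_smul_comm, ← hhp.eq] at hx
  rw [sub_mul, mul_sub, one_mul, mul_one, hx]
  abel

theorem mem_powOreSubalgebra_one_sub {x h p : A} {c : K} (hhp : Commute h p)
    (hx : x * p = p * (x + c • h)) : x ∈ powOreSubalgebra K (1 - p) := by
  refine mem_powOreSubalgebra_of_mul_eq_add (one_sub_mul_eq_of_mul_eq hhp hx) ?_
  have hp : Commute (1 - p) p := (Commute.one_left p).sub_left (Commute.refl p)
  exact (((Commute.one_left h).sub_left hhp.symm).mul_right hp).smul_right c

end OneSub

theorem stmt5_general (R : Type) [Ring R] [Algebra ℂ R]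
    (Λ : Type) [AddCommMonoid Λ]
    (V : Type) [AddCommGroup V] [Module ℂ V]
    (q : Λ → R) (hqadd : ∀ l m : Λ, q (l + m) = q l * q m)
    (σ : V →ₗ[ℂ] R) (h0 : V) (B : Λ → V → ℂ)
    (hcentral : ∀ r : R, σ h0 * r = r * σ h0)
    (hrel : ∀ (x : V) (l : Λ), σ x * q l = q l * (σ x + B l x • σ h0))
    (hgen : Algebra.adjoin ℂ (Set.range (⇑σ) ∪ Set.range q) = ⊤)
    (Sp : Finset Λ)
    (S : Submonoid R) (hS : S = Submonoid.closure {s | ∃ l ∈ Sp, s = 1 - q l}) :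
    ∀ s ∈ S, ∀ r : R, ∃ s' ∈ S, ∃ r' : R, s' * r = r' * s := by
  have hqcomm (l m : Λ) : Commute (q l) (q m) := by
    rw [Commute, SemiconjBy, ← hqadd, ← hqadd, add_comm]
  have hore (l : Λ) : powOreSubalgebra ℂ (1 - q l) = ⊤ := by
    rw [eq_top_iff, ← hgen, Algebra.adjoin_le_iff]
    rintro _ (⟨x, rfl⟩ | ⟨m, rfl⟩)
    · exact mem_powOreSubalgebra_one_sub (hcentral (q l)) (hrel x l)
    · exact mem_powOreSubalgebra_of_commute ((Commute.one_left _).sub_left (hqcomm l m))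
  subst hS
  refine isLeftOre_closure ?_
  rintro _ ⟨l, hl, rfl⟩ r
  have hr : r ∈ powOreSubalgebra ℂ (1 - q l) := hore l ▸ Algebra.mem_top
  obtain ⟨M, r', e⟩ := hr 1
  refine ⟨_, pow_mem (Submonoid.subset_closure ?_) M, r', by rwa [pow_one] at e⟩
  exact ⟨l, hl, rfl⟩

/-- The multiplicative set generated by the elements `1 − q^λ`, `λ ∈ Σ₊`, satisfies the
left Ore condition in the ring `R = S ⊗ Sym V` with relations
`x q^λ = q^λ (x + ℏ⟨λ, x̄⟩)`.  Here `R` is presented abstractly: a `ℂ`-algebra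
generated by a commuting family `σ(V)` (containing the central element `ℏ = σ h0`) and
monoid-like elements `q λ` for `λ` in a commutative monoid `Λ`, subject to the stated
commutation relation, where `⟨λ, x̄⟩` is the pairing `B λ x` (with `B λ h0 = 0`,
i.e. `ℏ̄ = 0`). -/
theorem stmt5 (R : Type) [Ring R] [Algebra ℂ R]
    (Λ : Type) [AddCommMonoid Λ]
    (V : Type) [AddCommGroup V] [Module ℂ V]
    (q : Λ → R) (hq0 : q 0 = 1) (hqadd : ∀ l m : Λ, q (l + m) = q l * q m)
    (σ : V →ₗ[ℂ] R) (h0 : V) (B : Λ → V → ℂ)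
    (hB0 : ∀ l, B l h0 = 0)
    (hcentral : ∀ r : R, σ h0 * r = r * σ h0)
    (hVcomm : ∀ x y : V, σ x * σ y = σ y * σ x)
    (hrel : ∀ (x : V) (l : Λ), σ x * q l = q l * (σ x + B l x • σ h0))
    (hgen : Algebra.adjoin ℂ (Set.range (⇑σ) ∪ Set.range q) = ⊤)
    (Sp : Finset Λ)
    (S : Submonoid R) (hS : S = Submonoid.closure {s | ∃ l ∈ Sp, s = 1 - q l}) :
    ∀ s ∈ S, ∀ r : R, ∃ s' ∈ S, ∃ r' : R, s' * r = r' * s :=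
  stmt5_general R Λ V q hqadd σ h0 B hcentral hrel hgen Sp S hS
end

section
/- With the same conventions, if λ = μ + ν in the lattice, then r(λ) = q^ν ([a]^λ)_ν (1 − q^μ) + [a]^λ (1 − q^ν) in R_T. -/
open scoped BigOperators

/-- The `ℏ`-factorial `[a]^k` in a commutative ring. -/
noncomputable def hfactC {R : Type} [CommRing R] (h a : R) : ℤ → R := fun k =>
  if 0 < k then ∏ j ∈ Finset.range k.toNat, (a - j • h)
  else if k < 0 then ∏ j ∈ Finset.range (-k).toNat, (a + (j + 1) • h)
  else 1

/-- `[a]^λ = ∏_i [a_i]^{λ_i}` in `ℂ[a₁,…,a_n,ℏ]`. -/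
noncomputable def alamP (n : ℕ) (v : Fin n → ℤ) : MvPolynomial (Option (Fin n)) ℂ :=
  ∏ i, hfactC (MvPolynomial.X none) (MvPolynomial.X (some i)) (v i)

/-- The shift `f ↦ f_λ`, substituting `a_i ↦ a_i + λ_i ℏ`. -/
noncomputable def shiftPoly (n : ℕ) (v : Fin n → ℤ) :
    MvPolynomial (Option (Fin n)) ℂ →ₐ[ℂ] MvPolynomial (Option (Fin n)) ℂ :=
  MvPolynomial.bind₁ (fun o => Option.elim o (MvPolynomial.X none)
    (fun i => MvPolynomial.X (some i) + v i • MvPolynomial.X none))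


/-- In the ring `R_T` (presented as in the previous statement) with
`r(λ) = [a]^λ (1 − q^λ)`: if `λ = μ + ν` then
`r(λ) = q^ν ([a]^λ)_ν (1 − q^μ) + [a]^λ (1 − q^ν)`. -/
theorem stmt13 (n : ℕ) (R : Type) [Ring R] [Algebra ℂ R]
    (G : Type) [AddCommGroup G] (c : G →+ (Fin n → ℤ))
    (hcinj : Function.Injective c)
    (q : G → R) (hq0 : q 0 = 1) (hqadd : ∀ x y : G, q (x + y) = q x * q y)
    (Φ : MvPolynomial (Option (Fin n)) ℂ →ₐ[ℂ] R)
    (hrel : ∀ (f : MvPolynomial (Option (Fin n)) ℂ) (x : G),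
      Φ f * q x = q x * Φ (shiftPoly n (c x) f))
    (μ ν : G) :
    Φ (alamP n (c (μ + ν))) * (1 - q (μ + ν))
      = q ν * Φ (shiftPoly n (c ν) (alamP n (c (μ + ν)))) * (1 - q μ)
        + Φ (alamP n (c (μ + ν))) * (1 - q ν) := by
  have h := hrel (alamP n (c (μ + ν))) ν
  rw [← h, hqadd]
  have hc : q ν * q μ = q μ * q ν := by rw [← hqadd, ← hqadd, add_comm]
  have h2 : Φ (alamP n (c (μ + ν))) * q ν * q μ
      = Φ (alamP n (c (μ + ν))) * (q μ * q ν) := by rw [mul_assoc, hc]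
  rw [mul_sub, mul_sub, mul_sub, mul_one, mul_one, h2]
  abel
end

section
/- If μ, ν ∈ Z^n satisfy μ_i ν_i ≥ 0 for all i, then there exist polynomials f, g ∈ C[a₁,...,a_n,ℏ] such that ([a]^{μ+ν})_ν = f · [a]^μ and [a]^{μ+ν} = g · [a]^ν. -/
open scoped BigOperators

lemma hfactC_map {R S : Type} {F : Type} [CommRing R] [CommRing S] [FunLike F R S]
    [RingHomClass F R S] (φ : F) (h a : R) (k : ℤ) :
    φ (hfactC h a k) = hfactC (φ h) (φ a) k := by
  unfold hfactC
  split_ifs <;> simp [map_prod, map_sub, map_add, map_nsmul]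

lemma hfact_dvd {R : Type} [CommRing R] (h a : R) (μ ν : ℤ) (hc : 0 ≤ μ * ν) :
    hfactC h a ν ∣ hfactC h a (μ + ν) := by
  rcases lt_trichotomy ν 0 with hν | hν | hν
  · have hμ : μ ≤ 0 := by nlinarith
    unfold hfactC
    rw [if_neg (by omega), if_pos hν, if_neg (by omega), if_pos (by omega)]
    exact Finset.prod_dvd_prod_of_subset _ _ _ (Finset.range_subset_range.2 (by omega))
  · subst hν; simp [hfactC]
  · have hμ : 0 ≤ μ := by nlinarith
    unfold hfactC
    rw [if_pos hν, if_pos (by omega)]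
    exact Finset.prod_dvd_prod_of_subset _ _ _ (Finset.range_subset_range.2 (by omega))

lemma hfact_dvd_shift {R : Type} [CommRing R] (h a : R) (μ ν : ℤ) (hc : 0 ≤ μ * ν) :
    hfactC h a μ ∣ hfactC h (a + ν • h) (μ + ν) := by
  rcases lt_trichotomy μ 0 with hμ | hμ | hμ
  · have hν : ν ≤ 0 := by nlinarith
    unfold hfactC
    rw [if_neg (by omega), if_pos hμ, if_neg (by omega), if_pos (by omega)]
    have hm : (-(μ + ν)).toNat = (-ν).toNat + (-μ).toNat := by omega
    rw [hm, Finset.prod_range_add]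
    have key : (∏ k ∈ Finset.range (-μ).toNat, (a + ν • h + ((-ν).toNat + k + 1) • h))
        = ∏ j ∈ Finset.range (-μ).toNat, (a + (j + 1) • h) := by
      refine Finset.prod_congr rfl fun k _ => ?_
      have h1 : ((-ν).toNat + k + 1 : ℕ) • h = (-ν) • h + ((k : ℤ) + 1) • h := by
        rw [← natCast_zsmul, ← add_smul]
        congr 1; push_cast; omega
      have h2 : ((k : ℕ) + 1 : ℕ) • h = ((k : ℤ) + 1) • h := by
        rw [← natCast_zsmul]; norm_cast
      rw [h1, h2, neg_smul]
      abel
    rw [key]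
    exact dvd_mul_left _ _
  · subst hμ; simp [hfactC]
  · have hν : 0 ≤ ν := by nlinarith
    unfold hfactC
    rw [if_pos hμ, if_pos (by omega)]
    have hm : (μ + ν).toNat = ν.toNat + μ.toNat := by omega
    rw [hm, Finset.prod_range_add]
    have key : (∏ k ∈ Finset.range μ.toNat, (a + ν • h - (ν.toNat + k) • h))
        = ∏ j ∈ Finset.range μ.toNat, (a - j • h) := by
      refine Finset.prod_congr rfl fun k _ => ?_
      have h1 : (ν.toNat + k : ℕ) • h = ν • h + (k : ℤ) • h := by
        rw [← natCast_zsmul, ← add_smul]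
        congr 1; push_cast; omega
      have h2 : (k : ℕ) • h = (k : ℤ) • h := by rw [← natCast_zsmul]
      rw [h1, h2]
      abel
    rw [key]
    exact dvd_mul_left _ _

/-- If `μ, ν ∈ ℤⁿ` satisfy `μ_i ν_i ≥ 0` for all `i` (no coordinate cancellation),
then `([a]^{μ+ν})_ν` is divisible by `[a]^μ` and `[a]^{μ+ν}` is divisible by `[a]^ν`
in `ℂ[a₁,…,a_n,ℏ]`. -/
theorem stmt14 (n : ℕ) (μ ν : Fin n → ℤ) (hcf : ∀ i, 0 ≤ μ i * ν i) :
    ∃ f g : MvPolynomial (Option (Fin n)) ℂ,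
      shiftPoly n ν (alamP n (μ + ν)) = f * alamP n μ ∧
      alamP n (μ + ν) = g * alamP n ν := by
  have h1 : alamP n μ ∣ shiftPoly n ν (alamP n (μ + ν)) := by
    unfold alamP
    rw [map_prod]
    refine Finset.prod_dvd_prod_of_dvd _ _ fun i _ => ?_
    rw [hfactC_map (shiftPoly n ν)]
    have e1 : (shiftPoly n ν) (MvPolynomial.X none) = MvPolynomial.X none := by
      simp [shiftPoly, MvPolynomial.bind₁_X_right]
    have e2 : (shiftPoly n ν) (MvPolynomial.X (some i)) =
        MvPolynomial.X (some i) + ν i • MvPolynomial.X none := by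
      simp [shiftPoly, MvPolynomial.bind₁_X_right]
    simp only [e1, e2, Pi.add_apply]
    exact hfact_dvd_shift _ _ _ _ (hcf i)
  have h2 : alamP n ν ∣ alamP n (μ + ν) := by
    refine Finset.prod_dvd_prod_of_dvd _ _ fun i _ => ?_
    simpa using hfact_dvd (MvPolynomial.X none) (MvPolynomial.X (some i)) (μ i) (ν i) (hcf i)
  obtain ⟨f, hf⟩ := h1
  obtain ⟨g, hg⟩ := h2
  exact ⟨f, g, by rw [hf, mul_comm], by rw [hg, mul_comm]⟩
end

section
/- In the hypertoric enveloping algebra setting, the left ideal J ⊆ R generated by {r(λ) : λ ∈ NΣ₊} (where r(λ) = [a]^λ(1−q^λ), restricted to the subring R with q-exponents in NΣ₊) is already generated by the finitely many elements r(λ) with λ a positive cocircuit, i.e. J = R · {r(λ) : λ ∈ Σ₊}. -/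
open scoped BigOperators

section auxHfact

variable {R : Type} [CommRing R]

lemma hfact_nat (h a : R) (k : ℕ) :
    hfactC h a (k : ℤ) = ∏ j ∈ Finset.range k, (a - (j : R) * h) := by
  unfold hfactC
  rcases Nat.eq_zero_or_pos k with hk | hk
  · subst hk; simp
  · rw [if_pos (by exact_mod_cast hk)]
    refine Finset.prod_congr (by simp) fun j _ => by rw [nsmul_eq_mul]

lemma hfact_negnat (h a : R) (k : ℕ) :
    hfactC h a (-(k : ℤ)) = ∏ j ∈ Finset.range k, (a + ((j : R) + 1) * h) := by
  unfold hfactC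
  rcases Nat.eq_zero_or_pos k with hk | hk
  · subst hk; simp
  · rw [if_neg (by omega), if_pos (by exact_mod_cast Int.neg_neg_of_pos (by exact_mod_cast hk))]
    refine Finset.prod_congr (by simp) fun j _ => by rw [nsmul_eq_mul]; push_cast; ring

lemma hfact_zero (h a : R) : hfactC h a 0 = 1 := by simp [hfactC]

lemma lemA (h a : R) (s t : ℤ) (hst : 0 ≤ s * t) :
    ∃ g, hfactC h a (s + t) = g * hfactC h a t := by
  rcases mul_nonneg_iff.mp hst with ⟨hs, ht⟩ | ⟨hs, ht⟩
  · obtain ⟨σ, rfl⟩ := Int.eq_ofNat_of_zero_le hs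
    obtain ⟨τ, rfl⟩ := Int.eq_ofNat_of_zero_le ht
    refine ⟨∏ j ∈ Finset.range σ, (a - ((τ + j : ℕ) : R) * h), ?_⟩
    rw [show ((σ:ℤ) + τ) = ((τ + σ : ℕ) : ℤ) by push_cast; ring, hfact_nat, hfact_nat,
      Finset.prod_range_add, mul_comm]
  · obtain ⟨σ, rfl⟩ := Int.exists_eq_neg_ofNat hs
    obtain ⟨τ, rfl⟩ := Int.exists_eq_neg_ofNat ht
    refine ⟨∏ j ∈ Finset.range σ, (a + (((τ + j : ℕ) : R) + 1) * h), ?_⟩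
    rw [show (-(σ:ℤ) + -(τ:ℤ)) = -((τ + σ : ℕ) : ℤ) by push_cast; ring, hfact_negnat, hfact_negnat,
      Finset.prod_range_add, mul_comm]

lemma lemB (h a : R) (s t : ℤ) (hst : 0 ≤ s * t) :
    ∃ g, hfactC h (a + t • h) (s + t) = g * hfactC h a s := by
  rcases mul_nonneg_iff.mp hst with ⟨hs, ht⟩ | ⟨hs, ht⟩
  · obtain ⟨σ, rfl⟩ := Int.eq_ofNat_of_zero_le hs
    obtain ⟨τ, rfl⟩ := Int.eq_ofNat_of_zero_le ht
    refine ⟨∏ j ∈ Finset.range τ, (a + (τ:R) * h - (j : R) * h), ?_⟩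
    rw [show ((σ:ℤ) + τ) = ((τ + σ : ℕ) : ℤ) by push_cast; ring, hfact_nat, hfact_nat,
      Finset.prod_range_add]
    have hz : (τ:ℤ) • h = (τ:R) * h := by rw [natCast_zsmul, nsmul_eq_mul]
    rw [hz]
    refine congrArg₂ (· * ·) rfl (Finset.prod_congr rfl fun j _ => ?_)
    push_cast; ring
  · obtain ⟨σ, rfl⟩ := Int.exists_eq_neg_ofNat hs
    obtain ⟨τ, rfl⟩ := Int.exists_eq_neg_ofNat ht
    refine ⟨∏ j ∈ Finset.range τ, (a - (τ:R) * h + ((j:R) + 1) * h), ?_⟩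
    rw [show (-(σ:ℤ) + -(τ:ℤ)) = -((τ + σ : ℕ) : ℤ) by push_cast; ring, hfact_negnat, hfact_negnat,
      Finset.prod_range_add]
    have hz : (-(τ:ℤ)) • h = -((τ:R) * h) := by rw [neg_zsmul, natCast_zsmul, nsmul_eq_mul]
    rw [hz]
    have ha : a + -((τ:R)*h) = a - (τ:R)*h := by ring
    rw [ha]
    refine congrArg₂ (· * ·) rfl (Finset.prod_congr rfl fun j _ => ?_)
    push_cast; ring

lemma lemE (h a : R) (s t : ℤ)
    (hD : s = 0 ∨ (s = 1 ∧ t ≤ -1) ∨ (s = -1 ∧ 1 ≤ t)) :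
    ∃ g, hfactC h a t = g * hfactC h a (t + s) := by
  rcases hD with rfl | ⟨rfl, ht⟩ | ⟨rfl, ht⟩
  · exact ⟨1, by rw [add_zero, one_mul]⟩
  · obtain ⟨τ, hτ⟩ := Int.exists_eq_neg_ofNat (by omega : t ≤ 0)
    obtain ⟨τ', rfl⟩ : ∃ τ', τ = τ' + 1 := ⟨τ - 1, by omega⟩
    subst hτ
    refine ⟨a + ((τ':R) + 1) * h, ?_⟩
    rw [show (-((τ'+1 : ℕ):ℤ) + 1) = -((τ' : ℕ):ℤ) by push_cast; ring, hfact_negnat, hfact_negnat,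
      Finset.prod_range_succ, mul_comm]
  · obtain ⟨τ, hτ⟩ := Int.eq_ofNat_of_zero_le (by omega : 0 ≤ t)
    obtain ⟨τ', rfl⟩ : ∃ τ', τ = τ' + 1 := ⟨τ - 1, by omega⟩
    subst hτ
    refine ⟨a - (τ':R) * h, ?_⟩
    rw [show (((τ'+1 : ℕ):ℤ) + -1) = ((τ' : ℕ):ℤ) by push_cast; ring, hfact_nat, hfact_nat,
      Finset.prod_range_succ, mul_comm]

lemma lemH (h a : R) (s t : ℤ)
    (hD : s = 0 ∨ (s = 1 ∧ t ≤ -1) ∨ (s = -1 ∧ 1 ≤ t)) :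
    ∃ g, hfactC h (a + t • h) t = g * hfactC h a s := by
  rcases hD with rfl | ⟨rfl, ht⟩ | ⟨rfl, ht⟩
  · exact ⟨hfactC h (a + t • h) t, by rw [hfact_zero, mul_one]⟩
  · obtain ⟨τ, hτ⟩ := Int.exists_eq_neg_ofNat (by omega : t ≤ 0)
    obtain ⟨τ', rfl⟩ : ∃ τ', τ = τ' + 1 := ⟨τ - 1, by omega⟩
    subst hτ
    have hz : (-((τ'+1:ℕ):ℤ)) • h = -(((τ':R)+1) * h) := by
      rw [neg_zsmul, natCast_zsmul, nsmul_eq_mul]; push_cast; ring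
    refine ⟨∏ j ∈ Finset.range τ', (a - ((τ':R)+1) * h + ((j:R)+1) * h), ?_⟩
    rw [hfact_negnat, hz, Finset.prod_range_succ]
    have h1 : hfactC h a 1 = a := by
      rw [show (1:ℤ) = ((1:ℕ):ℤ) by norm_num, hfact_nat]; simp
    rw [h1]
    refine congrArg₂ (· * ·) (Finset.prod_congr rfl fun j _ => by ring) (by ring)
  · obtain ⟨τ, hτ⟩ := Int.eq_ofNat_of_zero_le (by omega : 0 ≤ t)
    obtain ⟨τ', rfl⟩ : ∃ τ', τ = τ' + 1 := ⟨τ - 1, by omega⟩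
    subst hτ
    have hz : (((τ'+1:ℕ):ℤ)) • h = ((τ':R)+1) * h := by
      rw [natCast_zsmul, nsmul_eq_mul]; push_cast; ring
    refine ⟨∏ j ∈ Finset.range τ', (a + ((τ':R)+1) * h - (j:R) * h), ?_⟩
    rw [hfact_nat, hz, Finset.prod_range_succ]
    have h1 : hfactC h a (-1) = a + h := by
      rw [show (-1:ℤ) = -((1:ℕ):ℤ) by norm_num, hfact_negnat]; simp
    rw [h1]
    refine congrArg₂ (· * ·) (Finset.prod_congr rfl fun j _ => by ring) (by ring)

lemma natAbs_add_compat (a b : ℤ) (h : 0 ≤ a * b) :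
    (a + b).natAbs = a.natAbs + b.natAbs := by
  rcases mul_nonneg_iff.mp h with ⟨h1, h2⟩ | ⟨h1, h2⟩ <;> omega

end auxHfact

lemma map_hfactA {R S : Type} [CommRing R] [CommRing S] [Algebra ℂ R] [Algebra ℂ S]
    (φ : R →ₐ[ℂ] S) (h a : R) (k : ℤ) :
    φ (hfactC h a k) = hfactC (φ h) (φ a) k := by
  unfold hfactC
  split_ifs
  · rw [map_prod]
    exact Finset.prod_congr rfl fun j _ => by rw [map_sub, map_nsmul]
  · rw [map_prod]
    exact Finset.prod_congr rfl fun j _ => by rw [map_add, map_nsmul]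
  · exact map_one φ

lemma prod_fac {ι R : Type} [Fintype ι] [CommRing R] (f f' : ι → R)
    (h : ∀ i, ∃ g, f i = g * f' i) : ∃ g, ∏ i, f i = g * ∏ i, f' i := by
  choose g hg using h
  exact ⟨∏ i, g i, by rw [← Finset.prod_mul_distrib]; exact Finset.prod_congr rfl fun i _ => hg i⟩

lemma shift_alamP (n : ℕ) (w v : Fin n → ℤ) :
    shiftPoly n w (alamP n v) = ∏ i, hfactC (MvPolynomial.X none)
      (MvPolynomial.X (some i) + w i • MvPolynomial.X none) (v i) := by
  unfold alamP
  rw [map_prod]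
  refine Finset.prod_congr rfl fun i _ => ?_
  rw [map_hfactA (shiftPoly n w)]
  congr 1
  · show shiftPoly n w (MvPolynomial.X none) = MvPolynomial.X none
    unfold shiftPoly; rw [MvPolynomial.bind₁_X_right]; rfl
  · show shiftPoly n w (MvPolynomial.X (some i)) = _
    unfold shiftPoly; rw [MvPolynomial.bind₁_X_right]; rfl

/-- Proposition `JJ'` of the paper: in the hypertoric setting, the left ideal
`J ⊆ R` generated by the elements `r(λ) = [a]^λ (1 − q^λ)` for `λ ∈ ℕΣ₊` is already
generated by the `r(λ)` with `λ` a positive cocircuit: `J = R · {r(λ) : λ ∈ Σ₊}`.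
Here `G = t_Z* ⊆ ℤⁿ` is the lattice (embedded by `c`), cocircuits are the nonzero
primitive elements of minimal support (with coordinates in `{−1,0,1}` by
unimodularity), `Σ₊` consists of the cocircuits positive on the generic `ξ`,
and the ambient ring `R_T` is presented abstractly via `q` and `Φ` as before; the
subalgebra `A = R = S ⊗ ℂ[a,ℏ]` is the one generated by the polynomial part and the
`q^λ` with `λ ∈ ℕΣ₊`, and spans are taken with coefficients in `A`. -/
theorem stmt15 (n : ℕ) (G : Type) [AddCommGroup G] (c : G →+ (Fin n → ℤ))
    (hcinj : Function.Injective c)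
    (ξ : G →+ ℤ)
    (Cocircuit : G → Prop)
    (hCocircuit : ∀ x : G, Cocircuit x ↔ x ≠ 0 ∧
      (∀ (d : ℤ) (y : G), x = d • y → IsUnit d) ∧
      (∀ y : G, y ≠ 0 → {i | c y i ≠ 0} ⊆ {i | c x i ≠ 0} →
        {i | c y i ≠ 0} = {i | c x i ≠ 0}))
    (hunimod : ∀ x : G, Cocircuit x → ∀ i, c x i = 1 ∨ c x i = 0 ∨ c x i = -1)
    (hgeneric : ∀ x : G, Cocircuit x → ξ x ≠ 0)
    (hcf : ∀ x : G, ∃ (m : ℕ) (μ : Fin m → G),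
      (∀ k, Cocircuit (μ k) ∧ {i | c (μ k) i ≠ 0} ⊆ {i | c x i ≠ 0}) ∧
      x = ∑ k, μ k ∧ ∀ (i : Fin n) (k l : Fin m), 0 ≤ c (μ k) i * c (μ l) i)
    (R : Type) [Ring R] [Algebra ℂ R]
    (q : G → R) (hq0 : q 0 = 1) (hqadd : ∀ x y : G, q (x + y) = q x * q y)
    (Φ : MvPolynomial (Option (Fin n)) ℂ →ₐ[ℂ] R)
    (hrel : ∀ (f : MvPolynomial (Option (Fin n)) ℂ) (x : G),
      Φ f * q x = q x * Φ (shiftPoly n (c x) f))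
    (Sp : Set G) (hSp : Sp = {x | Cocircuit x ∧ 0 < ξ x})
    (A : Subalgebra ℂ R)
    (hA : A = Algebra.adjoin ℂ
      (Set.range (⇑Φ) ∪ q '' ((AddSubmonoid.closure Sp : AddSubmonoid G) : Set G))) :
    Submodule.span A {r : R | ∃ x ∈ AddSubmonoid.closure Sp,
        r = Φ (alamP n (c x)) * (1 - q x)}
      = Submodule.span A {r : R | ∃ x ∈ Sp, r = Φ (alamP n (c x)) * (1 - q x)} := by
  classical
  set J := Submodule.span A {r : R | ∃ x ∈ Sp, r = Φ (alamP n (c x)) * (1 - q x)} with hJ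
  have hAΦ : ∀ f, Φ f ∈ A := fun f => by
    rw [hA]; exact Algebra.subset_adjoin (Or.inl ⟨f, rfl⟩)
  have hAq : ∀ x ∈ AddSubmonoid.closure Sp, q x ∈ A := fun x hx => by
    rw [hA]; exact Algebra.subset_adjoin (Or.inr ⟨x, hx, rfl⟩)
  have hsmul : ∀ (z : R), z ∈ A → ∀ (r : R), r ∈ J → z * r ∈ J := fun z hz r hr =>
    J.smul_mem (⟨z, hz⟩ : A) hr
  have hconeg : ∀ z : G, Cocircuit z → Cocircuit (-z) := by
    intro z hz
    rw [hCocircuit] at hz ⊢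
    obtain ⟨h0, hprim, hmin⟩ := hz
    have hsupp : {i | c (-z) i ≠ 0} = {i | c z i ≠ 0} := by
      ext i; simp [map_neg]
    refine ⟨neg_ne_zero.mpr h0, ?_, ?_⟩
    · intro d y hdy
      exact hprim d (-y) (by rw [smul_neg, ← hdy, neg_neg])
    · intro y hy hsub
      rw [hsupp]
      exact hmin y hy (hsupp ▸ hsub)
  have hnz : ∀ z : G, z ≠ 0 → 1 ≤ ∑ i, (c z i).natAbs := by
    intro z hz
    by_contra hcon
    push_neg at hcon
    apply hz
    apply hcinj
    rw [map_zero]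
    funext i
    have h0 : ∑ i, (c z i).natAbs = 0 := by omega
    have h1 := Finset.sum_eq_zero_iff.mp h0 i (Finset.mem_univ i)
    have h2 : c z i = 0 := by omega
    simpa using h2
  have key : ∀ N : ℕ, ∀ x ∈ AddSubmonoid.closure Sp, (∑ i, (c x i).natAbs) ≤ N →
      Φ (alamP n (c x)) * (1 - q x) ∈ J := by
    intro N
    induction N with
    | zero =>
      intro x hx hn
      have hx0 : x = 0 := by
        apply hcinj; rw [map_zero]; funext i
        have h1 := Finset.sum_eq_zero_iff.mp (Nat.le_zero.mp hn) i (Finset.mem_univ i)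
        have h2 : c x i = 0 := by omega
        simpa using h2
      rw [hx0, hq0, sub_self, mul_zero]; exact J.zero_mem
    | succ N ih =>
      intro x hx hn
      by_cases hx0 : x = 0
      · rw [hx0, hq0, sub_self, mul_zero]; exact J.zero_mem
      obtain ⟨m, μ, hco, hsum, hcompat⟩ := hcf x
      have hcx : ∀ i, c x i = ∑ l, c (μ l) i := fun i => by rw [hsum, map_sum]; simp
      by_cases hneg : ∃ k, ξ (μ k) < 0
      · obtain ⟨k, hk⟩ := hneg
        have hcoμ := (hco k).1
        have hμuni := hunimod (μ k) hcoμ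
        have hcolam : Cocircuit (-μ k) := hconeg _ hcoμ
        have hlamSp : -μ k ∈ Sp := by
          rw [hSp]
          refine ⟨hcolam, ?_⟩
          rw [map_neg]; omega
        have hlamcl : -μ k ∈ AddSubmonoid.closure Sp := AddSubmonoid.subset_closure hlamSp
        have hycl : x + -μ k ∈ AddSubmonoid.closure Sp := AddSubmonoid.add_mem _ hx hlamcl
        have hD : ∀ i, c (-μ k) i = 0 ∨ (c (-μ k) i = 1 ∧ c x i ≤ -1) ∨
            (c (-μ k) i = -1 ∧ 1 ≤ c x i) := by
          intro i
          have hclam : c (-μ k) i = - c (μ k) i := by rw [map_neg]; rfl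
          rcases hμuni i with h1 | h1 | h1
          · right; right
            refine ⟨by rw [hclam, h1], ?_⟩
            rw [hcx i]
            calc (1:ℤ) = c (μ k) i := h1.symm
              _ ≤ ∑ l, c (μ l) i := Finset.single_le_sum (f := fun l => c (μ l) i)
                  (fun l _ => by show (0:ℤ) ≤ c (μ l) i; have h2 := hcompat i k l; rw [h1] at h2; omega)
                  (Finset.mem_univ k)
          · left; rw [hclam, h1, neg_zero]
          · right; left
            refine ⟨by rw [hclam, h1]; norm_num, ?_⟩
            rw [hcx i]
            have h2 : -c (μ k) i ≤ ∑ l, -c (μ l) i :=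
              Finset.single_le_sum (f := fun l => -c (μ l) i)
                (fun l _ => by show (0:ℤ) ≤ -c (μ l) i; have h3 := hcompat i k l; rw [h1] at h3; omega)
                (Finset.mem_univ k)
            rw [Finset.sum_neg_distrib, h1] at h2
            omega
        have hnorm : ∀ i, (c (x + -μ k) i).natAbs + (c (-μ k) i).natAbs = (c x i).natAbs := by
          intro i
          have hcyi : c (x + -μ k) i = c x i + c (-μ k) i := by rw [map_add]; rfl
          rcases hD i with h1 | ⟨h1, h2⟩ | ⟨h1, h2⟩ <;> omega
        have hlamne : -μ k ≠ 0 := ((hCocircuit _).mp hcolam).1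
        have hny : ∑ i, (c (x + -μ k) i).natAbs ≤ N := by
          have hsum2 : ∑ i, (c (x + -μ k) i).natAbs + ∑ i, (c (-μ k) i).natAbs
              = ∑ i, (c x i).natAbs := by
            rw [← Finset.sum_add_distrib]; exact Finset.sum_congr rfl fun i _ => hnorm i
          have := hnz _ hlamne
          omega
        have hMy := ih (x + -μ k) hycl hny
        obtain ⟨E, hE⟩ : ∃ E, alamP n (c x) = E * alamP n (c (x + -μ k)) := by
          unfold alamP
          apply prod_fac
          intro i
          have h1 : c (x + -μ k) i = c x i + c (-μ k) i := by rw [map_add]; rfl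
          rw [h1]
          exact lemE _ _ (c (-μ k) i) (c x i) (hD i)
        obtain ⟨hh, hH⟩ : ∃ hh, shiftPoly n (c x) (alamP n (c x)) = hh * alamP n (c (-μ k)) := by
          rw [shift_alamP]
          unfold alamP
          apply prod_fac
          intro i
          exact lemH _ _ (c (-μ k) i) (c x i) (hD i)
        have hqy : q (x + -μ k) = q x * q (-μ k) := hqadd x (-μ k)
        have t1 : Φ E * (Φ (alamP n (c (x + -μ k))) * (1 - q (x + -μ k)))
            = Φ (alamP n (c x)) * (1 - q (x + -μ k)) := by
          rw [← mul_assoc, ← map_mul, ← hE]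
        have t2 : (q x * Φ hh) * (Φ (alamP n (c (-μ k))) * (1 - q (-μ k)))
            = (Φ (alamP n (c x)) * q x) * (1 - q (-μ k)) := by
          have e1 : (q x * Φ hh) * (Φ (alamP n (c (-μ k))) * (1 - q (-μ k)))
              = (q x * (Φ hh * Φ (alamP n (c (-μ k))))) * (1 - q (-μ k)) := by noncomm_ring
          rw [e1, ← map_mul, ← hH, ← hrel]
        have main : Φ (alamP n (c x)) * (1 - q x)
            = Φ E * (Φ (alamP n (c (x + -μ k))) * (1 - q (x + -μ k)))
              - (q x * Φ hh) * (Φ (alamP n (c (-μ k))) * (1 - q (-μ k))) := by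
          rw [t1, t2, hqy]; noncomm_ring
        rw [main]
        exact J.sub_mem (hsmul _ (hAΦ E) _ hMy)
          (hsmul _ (A.mul_mem (hAq x hx) (hAΦ hh)) _
            (Submodule.subset_span ⟨-μ k, hlamSp, rfl⟩))
      · push_neg at hneg
        have hmpos : 0 < m := by
          rcases Nat.eq_zero_or_pos m with hm | hm
          · exfalso; apply hx0; rw [hsum]; subst hm; simp
          · exact hm
        set k₀ : Fin m := ⟨0, hmpos⟩ with hk₀
        have hμSp : ∀ l, μ l ∈ Sp := fun l => by
          rw [hSp]
          refine ⟨(hco l).1, ?_⟩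
          have h1 := hgeneric (μ l) (hco l).1
          have h2 := hneg l
          omega
        set ν := ∑ l ∈ Finset.univ.erase k₀, μ l with hν
        have hxdec : x = μ k₀ + ν := by
          rw [hsum, hν, Finset.add_sum_erase _ _ (Finset.mem_univ k₀)]
        have hνcl : ν ∈ AddSubmonoid.closure Sp :=
          AddSubmonoid.sum_mem _ fun l _ => AddSubmonoid.subset_closure (hμSp l)
        have hcνi : ∀ i, c ν i = ∑ l ∈ Finset.univ.erase k₀, c (μ l) i := fun i => by
          rw [hν, map_sum]; simp
        have hcomp : ∀ i, 0 ≤ c (μ k₀) i * c ν i := by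
          intro i
          rw [hcνi i, Finset.mul_sum]
          exact Finset.sum_nonneg fun l _ => hcompat i k₀ l
        have hcxi : ∀ i, c x i = c (μ k₀) i + c ν i := fun i => by rw [hxdec, map_add]; rfl
        have hnorm : ∀ i, (c x i).natAbs = (c (μ k₀) i).natAbs + (c ν i).natAbs := fun i => by
          rw [hcxi i]; exact natAbs_add_compat _ _ (hcomp i)
        have hμne : μ k₀ ≠ 0 := ((hCocircuit _).mp (hco k₀).1).1
        have hnν : ∑ i, (c ν i).natAbs ≤ N := by
          have hsum2 : ∑ i, (c x i).natAbs
              = ∑ i, (c (μ k₀) i).natAbs + ∑ i, (c ν i).natAbs := by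
            rw [← Finset.sum_add_distrib]; exact Finset.sum_congr rfl fun i _ => hnorm i
          have := hnz _ hμne
          omega
        have hMν := ih ν hνcl hnν
        obtain ⟨g₁, hg₁⟩ : ∃ g, alamP n (c x) = g * alamP n (c ν) := by
          unfold alamP
          apply prod_fac
          intro i
          rw [hcxi i]
          exact lemA _ _ (c (μ k₀) i) (c ν i) (hcomp i)
        obtain ⟨g₂, hg₂⟩ : ∃ g, shiftPoly n (c ν) (alamP n (c x)) = g * alamP n (c (μ k₀)) := by
          rw [shift_alamP]
          unfold alamP
          apply prod_fac
          intro i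
          rw [hcxi i]
          exact lemB _ _ (c (μ k₀) i) (c ν i) (hcomp i)
        have hq1 : q x = q ν * q (μ k₀) := by
          rw [← hqadd]
          congr 1
          rw [hxdec, add_comm]
        have t1 : Φ g₁ * (Φ (alamP n (c ν)) * (1 - q ν)) = Φ (alamP n (c x)) * (1 - q ν) := by
          rw [← mul_assoc, ← map_mul, ← hg₁]
        have t2 : (q ν * Φ g₂) * (Φ (alamP n (c (μ k₀))) * (1 - q (μ k₀)))
            = (Φ (alamP n (c x)) * q ν) * (1 - q (μ k₀)) := by
          have e1 : (q ν * Φ g₂) * (Φ (alamP n (c (μ k₀))) * (1 - q (μ k₀)))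
              = (q ν * (Φ g₂ * Φ (alamP n (c (μ k₀))))) * (1 - q (μ k₀)) := by noncomm_ring
          rw [e1, ← map_mul, ← hg₂, ← hrel]
        have main : Φ (alamP n (c x)) * (1 - q x)
            = Φ g₁ * (Φ (alamP n (c ν)) * (1 - q ν))
              + (q ν * Φ g₂) * (Φ (alamP n (c (μ k₀))) * (1 - q (μ k₀))) := by
          rw [t1, t2, hq1]; noncomm_ring
        rw [main]
        exact J.add_mem (hsmul _ (hAΦ g₁) _ hMν)
          (hsmul _ (A.mul_mem (hAq ν hνcl) (hAΦ g₂)) _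
            (Submodule.subset_span ⟨μ k₀, hμSp k₀, rfl⟩))
  apply le_antisymm
  · rw [Submodule.span_le]
    rintro r ⟨x, hx, rfl⟩
    exact key (∑ i, (c x i).natAbs) x hx le_rfl
  · apply Submodule.span_mono
    rintro r ⟨x, hx, rfl⟩
    exact ⟨x, AddSubmonoid.subset_closure hx, rfl⟩
end
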